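/- arXiv:1207.1698 — 6 statements merged into one kernel-verified Lean document; each statement's English description precedes it below -/
import Mathlib

section
/- Let I ⊂ ℝ be an open interval, a, b ∈ I with a < b, let f : I → ℝ be a twice differentiable mapping such that f'' is integrable on [a,b], and let 0 ≤ λ ≤ 1. Then (λ − 1)·f((a+b)/2) − λ·(f(a)+f(b))/2 + (1/(b−a))·∫ₐᵇ f(x) dx = (b−a)² · ∫₀¹ k(t)·f''(t·a + (1−t)·b) dt, where k(t) = (1/2)·t·(t − λ) for 0 ≤ t ≤ 1/2 and k(t) = (1/2)·(1−t)·(1 − λ − t) for 1/2 ≤ t ≤ 1. -/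
open MeasureTheory Set intervalIntegral
open scoped Interval

/-!
With `g t = f (t * a + (1 - t) * b)` we have `g'' = (b - a) ^ 2 * f'' (t * a + (1 - t) * b)`, so
the claim is `∫₀¹ k g'' = (λ - 1) g(1/2) - λ (g 0 + g 1) / 2 + ∫₀¹ g`. Integrate by parts twice on
`[0, 1/2]` and on `[1/2, 1]`: both branches of `k` have second derivative `1`, which produces
`∫₀¹ g`; `k` vanishes at `0` and `1` and is continuous at `1/2`, so of the boundary terms only
those with `k'` survive, namely `k'(0) = -λ/2`, `k'(1) = λ/2` and the jump `λ - 1` of `k'` at `1/2`.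
-/

noncomputable def sarikayaAktanKernel (lam t : ℝ) : ℝ :=
  if t ≤ 1 / 2 then (1 / 2) * t * (t - lam) else (1 / 2) * (1 - t) * (1 - lam - t)

theorem sarikayaAktanKernel_of_le {lam t : ℝ} (ht : t ≤ 1 / 2) :
    sarikayaAktanKernel lam t = (1 / 2) * t * (t - lam) :=
  if_pos ht

theorem sarikayaAktanKernel_of_ge {lam t : ℝ} (ht : 1 / 2 ≤ t) :
    sarikayaAktanKernel lam t = (1 / 2) * (1 - t) * (1 - lam - t) := by
  rcases ht.eq_or_lt with rfl | ht
  · rw [sarikayaAktanKernel_of_le le_rfl]; ring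
  · exact if_neg ht.not_ge

theorem continuous_sarikayaAktanKernel (lam : ℝ) : Continuous (sarikayaAktanKernel lam) :=
  Continuous.if_le (by fun_prop) (by fun_prop) continuous_id continuous_const
    fun t ht => by rw [ht]; ring

theorem integral_mul_deriv_deriv_eq {a b : ℝ} {u u' u'' v v' v'' : ℝ → ℝ}
    (hu : ∀ x ∈ [[a, b]], HasDerivAt u (u' x) x) (hu' : ∀ x ∈ [[a, b]], HasDerivAt u' (u'' x) x)
    (hv : ∀ x ∈ [[a, b]], HasDerivAt v (v' x) x) (hv' : ∀ x ∈ [[a, b]], HasDerivAt v' (v'' x) x)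
    (hu'' : IntervalIntegrable u'' volume a b) (hv'' : IntervalIntegrable v'' volume a b) :
    ∫ x in a..b, u x * v'' x
      = u b * v' b - u a * v' a - (u' b * v b - u' a * v a) + ∫ x in a..b, u'' x * v x := by
  have hu'i : IntervalIntegrable u' volume a b :=
    ContinuousOn.intervalIntegrable fun x hx => (hu' x hx).continuousAt.continuousWithinAt
  have hv'i : IntervalIntegrable v' volume a b :=
    ContinuousOn.intervalIntegrable fun x hx => (hv' x hx).continuousAt.continuousWithinAt
  rw [integral_mul_deriv_eq_deriv_mul hu hv' hu'i hv'',
    integral_mul_deriv_eq_deriv_mul hu' hv hu'' hv'i]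
  ring

theorem integral_sarikayaAktanKernel_mul {g g' g'' : ℝ → ℝ} (lam : ℝ)
    (hg : ∀ t ∈ Icc (0 : ℝ) 1, HasDerivAt g (g' t) t)
    (hg' : ∀ t ∈ Icc (0 : ℝ) 1, HasDerivAt g' (g'' t) t)
    (hg'' : IntervalIntegrable g'' volume 0 1) :
    ∫ t in (0 : ℝ)..1, sarikayaAktanKernel lam t * g'' t
      = (lam - 1) * g (1 / 2) - lam * (g 0 + g 1) / 2 + ∫ t in (0 : ℝ)..1, g t := by
  rw [← uIcc_of_le zero_le_one] at hg hg'
  have hsub₁ : [[(0 : ℝ), 1 / 2]] ⊆ [[0, 1]] := uIcc_subset_uIcc_left (by norm_num)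
  have hsub₂ : [[(1 / 2 : ℝ), 1]] ⊆ [[0, 1]] := uIcc_subset_uIcc_right (by norm_num)
  have hkg : IntervalIntegrable (fun t => sarikayaAktanKernel lam t * g'' t) volume 0 1 :=
    hg''.continuousOn_mul (continuous_sarikayaAktanKernel lam).continuousOn
  have hgi : IntervalIntegrable g volume 0 1 :=
    ContinuousOn.intervalIntegrable fun t ht => (hg t ht).continuousAt.continuousWithinAt
  have hleft : ∫ t in (0 : ℝ)..1 / 2, sarikayaAktanKernel lam t * g'' t
      = ∫ t in (0 : ℝ)..1 / 2, (1 / 2) * t * (t - lam) * g'' t :=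
    integral_congr fun t ht => by
      rw [uIcc_of_le (by norm_num)] at ht
      rw [sarikayaAktanKernel_of_le ht.2]
  have hright : ∫ t in (1 / 2 : ℝ)..1, sarikayaAktanKernel lam t * g'' t
      = ∫ t in (1 / 2 : ℝ)..1, (1 / 2) * (1 - t) * (1 - lam - t) * g'' t :=
    integral_congr fun t ht => by
      rw [uIcc_of_le (by norm_num)] at ht
      rw [sarikayaAktanKernel_of_ge ht.1]
  have hu₁ (t : ℝ) : HasDerivAt (fun t => (1 / 2) * t * (t - lam)) (t - lam / 2) t :=
    (((hasDerivAt_id' t).const_mul (1 / 2 : ℝ)).mul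
      ((hasDerivAt_id' t).sub_const lam)).congr_deriv (by ring)
  have hu₂ (t : ℝ) :
      HasDerivAt (fun t => (1 / 2) * (1 - t) * (1 - lam - t)) (t - (1 - lam / 2)) t :=
    ((((hasDerivAt_id' t).const_sub 1).const_mul (1 / 2 : ℝ)).mul
      ((hasDerivAt_id' t).const_sub (1 - lam))).congr_deriv (by ring)
  have ibp₁ := integral_mul_deriv_deriv_eq (u'' := fun _ => 1) (fun t _ => hu₁ t)
    (fun t _ => (hasDerivAt_id' t).sub_const _) (fun t ht => hg t (hsub₁ ht))
    (fun t ht => hg' t (hsub₁ ht)) intervalIntegrable_const (hg''.mono_set hsub₁)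
  have ibp₂ := integral_mul_deriv_deriv_eq (u'' := fun _ => 1) (fun t _ => hu₂ t)
    (fun t _ => (hasDerivAt_id' t).sub_const _) (fun t ht => hg t (hsub₂ ht))
    (fun t ht => hg' t (hsub₂ ht)) intervalIntegrable_const (hg''.mono_set hsub₂)
  simp only [one_mul] at ibp₁ ibp₂
  rw [← integral_add_adjacent_intervals (hkg.mono_set hsub₁) (hkg.mono_set hsub₂), hleft, hright,
    ibp₁, ibp₂, ← integral_add_adjacent_intervals (hgi.mono_set hsub₁) (hgi.mono_set hsub₂)]
  ring

theorem HasDerivAt.comp_mul_add_one_sub_mul {f : ℝ → ℝ} {f' a b t : ℝ}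
    (hf : HasDerivAt f f' (t * a + (1 - t) * b)) :
    HasDerivAt (fun s => f (s * a + (1 - s) * b)) (f' * (a - b)) t := by
  have hφ : HasDerivAt (fun s => s * a + (1 - s) * b) (a - b) t :=
    (((hasDerivAt_id' t).mul_const a).add
      (((hasDerivAt_id' t).const_sub 1).mul_const b)).congr_deriv (by ring)
  exact hf.comp t hφ

theorem IntervalIntegrable.comp_mul_add_one_sub_mul {f : ℝ → ℝ} {a b : ℝ}
    (hf : IntervalIntegrable f volume a b) :
    IntervalIntegrable (fun t => f (t * a + (1 - t) * b)) volume 0 1 := by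
  rcases eq_or_ne a b with rfl | hab
  · simp only [← add_mul, add_sub_cancel, one_mul]
    exact intervalIntegrable_const
  have h := (hf.comp_add_right b).comp_mul_left (c := a - b)
  rw [div_self (sub_ne_zero.2 hab), sub_self, zero_div] at h
  convert h.symm using 2 with t
  ring_nf

theorem integral_comp_mul_add_one_sub_mul (f : ℝ → ℝ) {a b : ℝ} (hab : a ≠ b) :
    ∫ t in (0 : ℝ)..1, f (t * a + (1 - t) * b) = (1 / (b - a)) * ∫ x in a..b, f x := by
  have h := integral_comp_mul_add f (sub_ne_zero.2 hab) b (a := 0) (b := 1)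
  simp only [mul_zero, mul_one, zero_add, sub_add_cancel] at h
  rw [integral_symm a b, smul_eq_mul, ← neg_sub b a, inv_neg] at h
  convert h using 1
  · congr 1 with t; ring_nf
  · ring

theorem sarikaya_aktan_identity_general
    (I : Set ℝ) (hI' : I.OrdConnected)
    (a b : ℝ) (ha : a ∈ I) (hb : b ∈ I) (hab : a < b)
    (f f' f'' : ℝ → ℝ)
    (hf' : ∀ x ∈ I, HasDerivAt f (f' x) x)
    (hf'' : ∀ x ∈ I, HasDerivAt f' (f'' x) x)
    (hint : IntervalIntegrable f'' volume a b)
    (lam : ℝ) :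
    (lam - 1) * f ((a + b) / 2) - lam * (f a + f b) / 2
        + (1 / (b - a)) * ∫ x in a..b, f x
      = (b - a) ^ 2 *
        ∫ t in (0 : ℝ)..1,
          (if t ≤ 1 / 2 then (1 / 2) * t * (t - lam)
            else (1 / 2) * (1 - t) * (1 - lam - t)) * f'' (t * a + (1 - t) * b) := by
  have hseg : ∀ t ∈ Icc (0 : ℝ) 1, t * a + (1 - t) * b ∈ I := fun t ht =>
    hI'.out ha hb ⟨by nlinarith [ht.1, ht.2], by nlinarith [ht.1, ht.2]⟩
  have key := integral_sarikayaAktanKernel_mul lam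
    (fun t ht => (hf' _ (hseg t ht)).comp_mul_add_one_sub_mul)
    (fun t ht => ((hf'' _ (hseg t ht)).comp_mul_add_one_sub_mul).mul_const (a - b))
    ((hint.comp_mul_add_one_sub_mul.mul_const (a - b)).mul_const (a - b))
  have hmid : (1 / 2 : ℝ) * a + (1 - 1 / 2) * b = (a + b) / 2 := by ring
  have hscale : ∫ t in (0 : ℝ)..1,
        sarikayaAktanKernel lam t * (f'' (t * a + (1 - t) * b) * (a - b) * (a - b))
      = (b - a) ^ 2 *
          ∫ t in (0 : ℝ)..1, sarikayaAktanKernel lam t * f'' (t * a + (1 - t) * b) := by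
    rw [← intervalIntegral.integral_const_mul]
    congr 1 with t
    ring
  rw [hscale, integral_comp_mul_add_one_sub_mul f hab.ne, hmid] at key
  simp only [zero_mul, one_mul, sub_zero, sub_self, zero_add, add_zero] at key
  rw [add_comm (f a)]
  exact key.symm

/-- Lemma (Sarikaya–Aktan): identity for twice differentiable functions. -/
theorem sarikaya_aktan_identity
    (I : Set ℝ) (hI : IsOpen I) (hI' : I.OrdConnected)
    (a b : ℝ) (ha : a ∈ I) (hb : b ∈ I) (hab : a < b)
    (f f' f'' : ℝ → ℝ)
    (hf' : ∀ x ∈ I, HasDerivAt f (f' x) x)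
    (hf'' : ∀ x ∈ I, HasDerivAt f' (f'' x) x)
    (hint : IntervalIntegrable f'' volume a b)
    (lam : ℝ) (hlam0 : 0 ≤ lam) (hlam1 : lam ≤ 1) :
    (lam - 1) * f ((a + b) / 2) - lam * (f a + f b) / 2
        + (1 / (b - a)) * ∫ x in a..b, f x
      = (b - a) ^ 2 *
        ∫ t in (0 : ℝ)..1,
          (if t ≤ 1 / 2 then (1 / 2) * t * (t - lam)
            else (1 / 2) * (1 - t) * (1 - lam - t)) * f'' (t * a + (1 - t) * b) :=
  sarikaya_aktan_identity_general I hI' a b ha hb hab f f' f'' hf' hf'' hint lam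
end

section
/- Let I ⊂ ℝ be an open interval, a, b ∈ I with a < b, f : I → ℝ a twice differentiable mapping such that f'' is integrable on [a,b], let q ≥ 1, and suppose |f''|^q belongs to the Godunova-Levin class Q(I). If 0 ≤ λ ≤ 1/2, then |(λ − 1)·f((a+b)/2) − λ·(f(a)+f(b))/2 + (1/(b−a))·∫ₐᵇ f(x) dx| ≤ ((b−a)²/2) · (λ³/3 + (1−3λ)/24)^(1 − 1/q) · { ( [λ² − (4λ−1)/8]·|f''(a)|^q + [(1−λ)·ln(2(1−λ)²) + (20λ − 8λ² − 5)/8]·|f''(b)|^q )^(1/q) + ( [(1−λ)·ln(2(1−λ)²) + (20λ − 8λ² − 5)/8]·|f''(a)|^q + [λ² − (4λ−1)/8]·|f''(b)|^q )^(1/q) }. -/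
/-!
Integrating by parts twice against the kernel `t (t - λ)` on each half of `[a, b]` (run from
`a` towards the midpoint and from `b` towards it) writes the left-hand side as
`(b - a)² / 2` times the sum of two integrals `∫₀^{1/2} t (t - λ) f''(t x + (1 - t) y) dt`.
Each is bounded by Hölder's inequality with weight `|t (t - λ)|` (in power-mean form), and the
Godunova–Levin inequality `|f''(t x + (1 - t) y)|^q ≤ |f'' x|^q / t + |f'' y|^q / (1 - t)` reduces
the remaining weighted integral to the elementary integrals `∫₀^{1/2} |t - λ|` and
`∫₀^{1/2} |t (t - λ)| / (1 - t)`.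
-/

open MeasureTheory Set Real

/-- A nonnegative function `g` belongs to the Godunova–Levin class `Q(I)` if for all
`x, y ∈ I` and `l ∈ (0,1)` one has `g (l*x + (1-l)*y) ≤ g x / l + g y / (1-l)`. -/
def GodunovaLevin (I : Set ℝ) (g : ℝ → ℝ) : Prop :=
  (∀ x ∈ I, 0 ≤ g x) ∧
    ∀ x ∈ I, ∀ y ∈ I, ∀ l : ℝ, 0 < l → l < 1 →
      g (l * x + (1 - l) * y) ≤ g x / l + g y / (1 - l)

theorem integral_mul_le_weighted_power_mean {α : Type*} [MeasurableSpace α] {μ : Measure α}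
    {w φ : α → ℝ} {q : ℝ} (hq : 1 ≤ q) (hw0 : ∀ a, 0 ≤ w a) (hφ0 : ∀ a, 0 ≤ φ a)
    (hw : Integrable w μ) (hwφ : Integrable (fun a => w a * φ a ^ q) μ) :
    ∫ a, w a * φ a ∂μ
      ≤ (∫ a, w a ∂μ) ^ (1 - 1 / q) * (∫ a, w a * φ a ^ q ∂μ) ^ (1 / q) := by
  have hq0 : 0 < q := by linarith
  have hp : 0 ≤ 1 - 1 / q := by rw [sub_nonneg, div_le_one hq0]; exact hq
  have hwφ0 : ∀ a, 0 ≤ w a * φ a ^ q := fun a => mul_nonneg (hw0 a) (rpow_nonneg (hφ0 a) q)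
  have hsplit : ∀ a, w a * φ a = w a ^ (1 - 1 / q) * (w a * φ a ^ q) ^ (1 / q) := fun a => by
    rw [mul_rpow (hw0 a) (rpow_nonneg (hφ0 a) q), one_div, rpow_rpow_inv (hφ0 a) hq0.ne',
      ← mul_assoc, ← rpow_add' (hw0 a) (by simp)]
    simp
  have hRHS : 0 ≤ (∫ a, w a ∂μ) ^ (1 - 1 / q) * (∫ a, w a * φ a ^ q ∂μ) ^ (1 / q) :=
    mul_nonneg (rpow_nonneg (integral_nonneg hw0) _) (rpow_nonneg (integral_nonneg hwφ0) _)
  by_cases hint : Integrable (fun a => w a * φ a) μ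
  swap
  · rw [integral_undef hint]; exact hRHS
  rw [← ENNReal.ofReal_le_ofReal_iff hRHS,
    ENNReal.ofReal_mul (rpow_nonneg (integral_nonneg hw0) _),
    ← ENNReal.ofReal_rpow_of_nonneg (integral_nonneg hw0) hp,
    ← ENNReal.ofReal_rpow_of_nonneg (integral_nonneg hwφ0) (by positivity),
    ofReal_integral_eq_lintegral_ofReal hint (.of_forall fun a => mul_nonneg (hw0 a) (hφ0 a)),
    ofReal_integral_eq_lintegral_ofReal hw (.of_forall hw0),
    ofReal_integral_eq_lintegral_ofReal hwφ (.of_forall hwφ0)]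
  calc ∫⁻ a, ENNReal.ofReal (w a * φ a) ∂μ
      = ∫⁻ a, ENNReal.ofReal (w a) ^ (1 - 1 / q)
          * ENNReal.ofReal (w a * φ a ^ q) ^ (1 / q) ∂μ := by
        congr 1 with a
        rw [ENNReal.ofReal_rpow_of_nonneg (hw0 a) hp,
          ENNReal.ofReal_rpow_of_nonneg (hwφ0 a) (by positivity),
          ← ENNReal.ofReal_mul (rpow_nonneg (hw0 a) _), ← hsplit]
    _ ≤ _ := ENNReal.lintegral_mul_norm_pow_le hw.aemeasurable.ennreal_ofReal
          hwφ.aemeasurable.ennreal_ofReal hp (by positivity) (by ring)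

theorem integral_abs_eq_of_hasDerivAt_of_sign_change {F h : ℝ → ℝ} {a b c : ℝ}
    (hab : a ≤ b) (hbc : b ≤ c) (hF : ∀ x ∈ Icc a c, HasDerivAt F (h x) x)
    (hint : IntervalIntegrable h volume a c)
    (hneg : ∀ x ∈ Icc a b, h x ≤ 0) (hpos : ∀ x ∈ Icc b c, 0 ≤ h x) :
    ∫ x in a..c, |h x| = F a - 2 * F b + F c := by
  have hIcc : uIcc a c = Icc a c := uIcc_of_le (hab.trans hbc)
  have hb : b ∈ uIcc a c := hIcc ▸ ⟨hab, hbc⟩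
  have hsub₁ : uIcc a b ⊆ uIcc a c := uIcc_subset_uIcc_left hb
  have hsub₂ : uIcc b c ⊆ uIcc a c := uIcc_subset_uIcc_right hb
  rw [← intervalIntegral.integral_add_adjacent_intervals (hint.abs.mono_set hsub₁)
      (hint.abs.mono_set hsub₂),
    intervalIntegral.integral_congr (g := fun x => -h x)
      (fun x hx => abs_of_nonpos (hneg x (uIcc_of_le hab ▸ hx))),
    intervalIntegral.integral_congr (g := h)
      (fun x hx => abs_of_nonneg (hpos x (uIcc_of_le hbc ▸ hx))),
    intervalIntegral.integral_neg,
    intervalIntegral.integral_eq_sub_of_hasDerivAt (fun x hx => hF x (hIcc ▸ hsub₁ hx))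
      (hint.mono_set hsub₁),
    intervalIntegral.integral_eq_sub_of_hasDerivAt (fun x hx => hF x (hIcc ▸ hsub₂ hx))
      (hint.mono_set hsub₂)]
  ring

section Kernel

variable {lam : ℝ}

theorem integral_abs_sub (h0 : 0 ≤ lam) (h1 : lam ≤ 1 / 2) :
    ∫ t in (0:ℝ)..1 / 2, |t - lam| = lam ^ 2 - (4 * lam - 1) / 8 := by
  rw [integral_abs_eq_of_hasDerivAt_of_sign_change (F := fun t => t ^ 2 / 2 - lam * t) h0 h1
    (fun t _ => (((hasDerivAt_pow 2 t).div_const 2).sub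
      ((hasDerivAt_id t).const_mul lam)).congr_deriv (by simp))
    (Continuous.intervalIntegrable (by fun_prop) _ _)
    (fun t ht => by linarith [ht.2]) (fun t ht => by linarith [ht.1])]
  ring

theorem integral_abs_mul_sub (h0 : 0 ≤ lam) (h1 : lam ≤ 1 / 2) :
    ∫ t in (0:ℝ)..1 / 2, |t * (t - lam)| = lam ^ 3 / 3 + (1 - 3 * lam) / 24 := by
  rw [integral_abs_eq_of_hasDerivAt_of_sign_change (F := fun t => t ^ 3 / 3 - lam * t ^ 2 / 2)
    h0 h1
    (fun t _ => (((hasDerivAt_pow 3 t).div_const 3).sub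
      (((hasDerivAt_pow 2 t).const_mul lam).div_const 2)).congr_deriv (by push_cast; ring))
    (Continuous.intervalIntegrable (by fun_prop) _ _)
    (fun t ht => mul_nonpos_of_nonneg_of_nonpos ht.1 (by linarith [ht.2]))
    (fun t ht => mul_nonneg (by linarith [ht.1]) (by linarith [ht.1]))]
  ring

theorem integral_abs_mul_sub_div_one_sub (h0 : 0 ≤ lam) (h1 : lam ≤ 1 / 2) :
    ∫ t in (0:ℝ)..1 / 2, |t * (t - lam) / (1 - t)|
      = (1 - lam) * log (2 * (1 - lam) ^ 2) + (20 * lam - 8 * lam ^ 2 - 5) / 8 := by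
  have hne : ∀ t ∈ Icc (0:ℝ) (1 / 2), 1 - t ≠ 0 := fun t ht => by linarith [ht.2]
  -- antiderivative of `t (t - λ) / (1 - t) = -t - (1 - λ) + (1 - λ) / (1 - t)`
  rw [integral_abs_eq_of_hasDerivAt_of_sign_change
    (F := fun t => -(t ^ 2 / 2) - (1 - lam) * t - (1 - lam) * log (1 - t)) h0 h1
    (fun t ht => by
      refine ((((hasDerivAt_pow 2 t).div_const 2).neg.sub
        ((hasDerivAt_id t).const_mul (1 - lam))).sub
        ((((hasDerivAt_id t).const_sub 1).log (hne t ht)).const_mul (1 - lam))).congr_deriv ?_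
      field_simp [hne t ht]
      simp only [Nat.cast_ofNat, id_eq]
      ring)
    (ContinuousOn.intervalIntegrable (by
      rw [uIcc_of_le (by norm_num)]; exact ContinuousOn.div (by fun_prop) (by fun_prop) hne))
    (fun t ht => div_nonpos_of_nonpos_of_nonneg
      (mul_nonpos_of_nonneg_of_nonpos ht.1 (by linarith [ht.2])) (by linarith [ht.2]))
    (fun t ht => div_nonneg (mul_nonneg (by linarith [ht.1]) (by linarith [ht.1]))
      (by linarith [ht.2]))]
  have hlog : log (2 * (1 - lam) ^ 2) = log 2 + 2 * log (1 - lam) := by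
    rw [log_mul (by norm_num) (by nlinarith), log_pow]; push_cast; ring
  rw [hlog, show (1:ℝ) - 1 / 2 = 2⁻¹ by norm_num, log_inv, sub_zero, log_one]
  ring

theorem integral_abs_mul_sub_mul_le {q A B : ℝ} {φ : ℝ → ℝ} (hq : 1 ≤ q) (h0 : 0 ≤ lam)
    (h1 : lam ≤ 1 / 2) (hφ0 : ∀ t, 0 ≤ φ t)
    (hφ : AEStronglyMeasurable φ (volume.restrict (Ioc 0 (1 / 2))))
    (hbound : ∀ t ∈ Ioc (0:ℝ) (1 / 2), φ t ^ q ≤ A / t + B / (1 - t)) :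
    ∫ t in (0:ℝ)..1 / 2, |t * (t - lam)| * φ t
      ≤ (lam ^ 3 / 3 + (1 - 3 * lam) / 24) ^ (1 - 1 / q) *
        ((lam ^ 2 - (4 * lam - 1) / 8) * A
          + ((1 - lam) * log (2 * (1 - lam) ^ 2) + (20 * lam - 8 * lam ^ 2 - 5) / 8) * B)
          ^ (1 / q) := by
  have hq0 : 0 < q := by linarith
  have hne : ∀ t ∈ Icc (0:ℝ) (1 / 2), 1 - t ≠ 0 := fun t ht => by linarith [ht.2]
  set G : ℝ → ℝ := fun t => A * |t - lam| + B * |t * (t - lam) / (1 - t)|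
  have hwφ_le : ∀ t ∈ Ioc (0:ℝ) (1 / 2), |t * (t - lam)| * φ t ^ q ≤ G t := fun t ht =>
    calc |t * (t - lam)| * φ t ^ q ≤ |t * (t - lam)| * (A / t + B / (1 - t)) :=
          mul_le_mul_of_nonneg_left (hbound t ht) (abs_nonneg _)
      _ = G t := by
          simp only [G]
          rw [abs_div, abs_of_pos (by linarith [ht.2] : 0 < 1 - t), abs_mul, abs_of_pos ht.1]
          field_simp [ht.1.ne']
  have hw : IntervalIntegrable (fun t : ℝ => |t * (t - lam)|) volume 0 (1 / 2) :=
    Continuous.intervalIntegrable (by fun_prop) _ _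
  have hG₁ : IntervalIntegrable (fun t => |t - lam|) volume 0 (1 / 2) :=
    Continuous.intervalIntegrable (by fun_prop) _ _
  have hG₂ : IntervalIntegrable (fun t => |t * (t - lam) / (1 - t)|) volume 0 (1 / 2) := by
    refine ContinuousOn.intervalIntegrable ?_
    rw [uIcc_of_le (by norm_num)]
    exact (ContinuousOn.div (by fun_prop) (by fun_prop) hne).abs
  have hG : IntervalIntegrable G volume 0 (1 / 2) := (hG₁.const_mul A).add (hG₂.const_mul B)
  have hwφ : IntegrableOn (fun t => |t * (t - lam)| * φ t ^ q) (Ioc 0 (1 / 2)) := by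
    refine hG.1.mono' (hw.1.aestronglyMeasurable.mul
      ((continuous_rpow_const hq0.le).comp_aestronglyMeasurable hφ)) ?_
    filter_upwards [ae_restrict_mem measurableSet_Ioc] with t ht
    rw [norm_of_nonneg (mul_nonneg (abs_nonneg _) (rpow_nonneg (hφ0 t) q))]
    exact hwφ_le t ht
  have hwφ_int : ∫ t in Ioc (0:ℝ) (1 / 2), |t * (t - lam)| * φ t ^ q
      ≤ (lam ^ 2 - (4 * lam - 1) / 8) * A
          + ((1 - lam) * log (2 * (1 - lam) ^ 2) + (20 * lam - 8 * lam ^ 2 - 5) / 8) * B :=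
    calc _ ≤ ∫ t in Ioc (0:ℝ) (1 / 2), G t :=
          setIntegral_mono_on hwφ hG.1 measurableSet_Ioc hwφ_le
      _ = _ := by
          rw [← intervalIntegral.integral_of_le (by norm_num),
            intervalIntegral.integral_add (hG₁.const_mul A) (hG₂.const_mul B),
            intervalIntegral.integral_const_mul, intervalIntegral.integral_const_mul,
            integral_abs_sub h0 h1, integral_abs_mul_sub_div_one_sub h0 h1]
          ring
  rw [intervalIntegral.integral_of_le (by norm_num)]
  calc _ ≤ (∫ t in Ioc (0:ℝ) (1 / 2), |t * (t - lam)|) ^ (1 - 1 / q) *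
        (∫ t in Ioc (0:ℝ) (1 / 2), |t * (t - lam)| * φ t ^ q) ^ (1 / q) :=
        integral_mul_le_weighted_power_mean hq (fun t => abs_nonneg _) hφ0 hw.1 hwφ
    _ ≤ (∫ t in Ioc (0:ℝ) (1 / 2), |t * (t - lam)|) ^ (1 - 1 / q) *
        ((lam ^ 2 - (4 * lam - 1) / 8) * A
          + ((1 - lam) * log (2 * (1 - lam) ^ 2) + (20 * lam - 8 * lam ^ 2 - 5) / 8) * B)
          ^ (1 / q) := by
        gcongr
        exact setIntegral_nonneg measurableSet_Ioc fun t _ =>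
          mul_nonneg (abs_nonneg _) (rpow_nonneg (hφ0 t) q)
    _ = _ := by rw [← intervalIntegral.integral_of_le (by norm_num), integral_abs_mul_sub h0 h1]

theorem integral_mul_sub_mul_second_deriv {φ φ' φ'' : ℝ → ℝ} {c : ℝ}
    (hφ : ∀ t ∈ uIcc 0 c, HasDerivAt φ (φ' t) t)
    (hφ' : ∀ t ∈ uIcc 0 c, HasDerivAt φ' (φ'' t) t)
    (hint : IntervalIntegrable φ'' volume 0 c) :
    ∫ t in 0..c, t * (t - lam) * φ'' t
      = c * (c - lam) * φ' c - (2 * c - lam) * φ c - lam * φ 0 + 2 * ∫ t in 0..c, φ t := by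
  have hφ'_cont : ContinuousOn φ' (uIcc 0 c) := fun t ht =>
    (hφ' t ht).continuousAt.continuousWithinAt
  rw [intervalIntegral.integral_mul_deriv_eq_deriv_mul (u := fun t => t * (t - lam))
      (u' := fun t => 2 * t - lam)
      (fun t _ => ((hasDerivAt_id t).mul ((hasDerivAt_id t).sub_const lam)).congr_deriv
        (by simp only [id_eq]; ring))
      hφ' (Continuous.intervalIntegrable (by fun_prop) _ _) hint,
    intervalIntegral.integral_mul_deriv_eq_deriv_mul (u := fun t => 2 * t - lam)
      (u' := fun _ => 2)
      (fun t _ => (((hasDerivAt_id t).const_mul 2).sub_const lam).congr_deriv (by simp))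
      hφ intervalIntegrable_const hφ'_cont.intervalIntegrable,
    intervalIntegral.integral_const_mul]
  ring

end Kernel

theorem mul_add_one_sub_mul_mem_uIcc {u v t : ℝ} (ht : t ∈ Icc (0:ℝ) 1) :
    t * v + (1 - t) * u ∈ uIcc u v := by
  rw [← segment_eq_uIcc]
  exact ⟨1 - t, t, by linarith [ht.2], ht.1, by ring, by simp only [smul_eq_mul]; ring⟩

theorem IntervalIntegrable.comp_mul_add_one_sub_mul_s1 {g : ℝ → ℝ} {u v : ℝ}
    (hg : IntervalIntegrable g volume u v) (huv : u ≠ v) :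
    IntervalIntegrable (fun t => g (t * v + (1 - t) * u)) volume 0 1 := by
  have h := (hg.comp_add_right u).comp_mul_left (c := v - u)
  rw [sub_self, zero_div, div_self (sub_ne_zero.mpr huv.symm)] at h
  convert h using 2 with t
  ring_nf

theorem GodunovaLevin.abs_integral_mul_sub_mul_le {I : Set ℝ} {g : ℝ → ℝ} {x y q lam : ℝ}
    (hQ : GodunovaLevin I fun z => |g z| ^ q) (hx : x ∈ I) (hy : y ∈ I) (hxy : x ≠ y)
    (hg : IntervalIntegrable g volume y x) (hq : 1 ≤ q) (h0 : 0 ≤ lam) (h1 : lam ≤ 1 / 2) :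
    |∫ t in (0:ℝ)..1 / 2, t * (t - lam) * g (t * x + (1 - t) * y)|
      ≤ (lam ^ 3 / 3 + (1 - 3 * lam) / 24) ^ (1 - 1 / q) *
        ((lam ^ 2 - (4 * lam - 1) / 8) * |g x| ^ q
          + ((1 - lam) * log (2 * (1 - lam) ^ 2) + (20 * lam - 8 * lam ^ 2 - 5) / 8) * |g y| ^ q)
          ^ (1 / q) := by
  have hg_half : IntervalIntegrable (fun t => g (t * x + (1 - t) * y)) volume 0 (1 / 2) :=
    (hg.comp_mul_add_one_sub_mul_s1 hxy.symm).mono_set (uIcc_subset_uIcc_left (by norm_num))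
  calc _ ≤ ∫ t in (0:ℝ)..1 / 2, |t * (t - lam) * g (t * x + (1 - t) * y)| :=
        intervalIntegral.abs_integral_le_integral_abs (by norm_num)
    _ = ∫ t in (0:ℝ)..1 / 2, |t * (t - lam)| * |g (t * x + (1 - t) * y)| := by
        simp only [abs_mul]
    _ ≤ _ := integral_abs_mul_sub_mul_le hq h0 h1 (fun _ => abs_nonneg _)
        hg_half.abs.1.aestronglyMeasurable
        (fun t ht => hQ.2 x hx y hy t ht.1 (by linarith [ht.2]))

theorem integral_mul_sub_mul_second_deriv_comp_half_segment {f f' f'' : ℝ → ℝ} {u v lam : ℝ}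
    (huv : u ≠ v) (hf' : ∀ x ∈ uIcc u v, HasDerivAt f (f' x) x)
    (hf'' : ∀ x ∈ uIcc u v, HasDerivAt f' (f'' x) x)
    (hint : IntervalIntegrable f'' volume u v) :
    (v - u) ^ 2 * ∫ t in (0:ℝ)..1 / 2, t * (t - lam) * f'' (t * v + (1 - t) * u)
      = (1 - 2 * lam) / 4 * (v - u) * f' ((u + v) / 2) - (1 - lam) * f ((u + v) / 2)
        - lam * f u + 2 / (v - u) * ∫ x in u..(u + v) / 2, f x := by
  have hvu : v - u ≠ 0 := sub_ne_zero.mpr huv.symm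
  have hmem : ∀ t ∈ uIcc (0:ℝ) (1 / 2), t * v + (1 - t) * u ∈ uIcc u v := fun t ht =>
    mul_add_one_sub_mul_mem_uIcc (uIcc_subset_Icc (by norm_num) (by norm_num) ht)
  have hline : ∀ t : ℝ, HasDerivAt (fun t => t * v + (1 - t) * u) (v - u) t := fun t =>
    (((hasDerivAt_id t).mul_const v).add (((hasDerivAt_id t).const_sub 1).mul_const u)).congr_deriv
      (by ring)
  have h := integral_mul_sub_mul_second_deriv (lam := lam)
    (φ := fun t => f (t * v + (1 - t) * u)) (φ' := fun t => f' (t * v + (1 - t) * u) * (v - u))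
    (φ'' := fun t => f'' (t * v + (1 - t) * u) * (v - u) * (v - u))
    (fun t ht => (hf' _ (hmem t ht)).comp t (hline t))
    (fun t ht => ((hf'' _ (hmem t ht)).comp t (hline t)).mul_const (v - u))
    (((hint.comp_mul_add_one_sub_mul_s1 huv).mono_set
      (uIcc_subset_uIcc_left (by norm_num))).mul_const _ |>.mul_const _)
  have hchange : ∫ t in (0:ℝ)..1 / 2, f (t * v + (1 - t) * u)
      = (v - u)⁻¹ * ∫ x in u..(u + v) / 2, f x := by
    have := intervalIntegral.integral_comp_mul_add (f := f) (a := 0) (b := 1 / 2) hvu u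
    rw [mul_zero, zero_add, smul_eq_mul, show (v - u) * (1 / 2) + u = (u + v) / 2 by ring]
      at this
    rw [← this]
    congr 1 with t
    ring_nf
  rw [hchange, show (1:ℝ) / 2 * v + (1 - 1 / 2) * u = (u + v) / 2 by ring,
    show (0:ℝ) * v + (1 - 0) * u = u by ring] at h
  calc _ = ∫ t in (0:ℝ)..1 / 2,
        t * (t - lam) * (f'' (t * v + (1 - t) * u) * (v - u) * (v - u)) := by
        rw [← intervalIntegral.integral_const_mul]
        congr 1 with t
        ring
    _ = _ := by
        rw [h]
        field_simp
        ring

theorem midpoint_trapezoid_combination_eq {f f' f'' : ℝ → ℝ} {a b lam : ℝ} (hab : a ≠ b)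
    (hf' : ∀ x ∈ uIcc a b, HasDerivAt f (f' x) x)
    (hf'' : ∀ x ∈ uIcc a b, HasDerivAt f' (f'' x) x)
    (hint : IntervalIntegrable f'' volume a b) :
    (lam - 1) * f ((a + b) / 2) - lam * (f a + f b) / 2 + (1 / (b - a)) * ∫ x in a..b, f x
      = (b - a) ^ 2 / 2 * ((∫ t in (0:ℝ)..1 / 2, t * (t - lam) * f'' (t * a + (1 - t) * b))
        + ∫ t in (0:ℝ)..1 / 2, t * (t - lam) * f'' (t * b + (1 - t) * a)) := by
  have hleft := integral_mul_sub_mul_second_deriv_comp_half_segment (lam := lam) hab hf' hf'' hint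
  have hright := integral_mul_sub_mul_second_deriv_comp_half_segment (lam := lam) hab.symm
    (uIcc_comm a b ▸ hf') (uIcc_comm a b ▸ hf'') hint.symm
  have hf_int : IntervalIntegrable f volume a b :=
    ContinuousOn.intervalIntegrable fun x hx => (hf' x hx).continuousAt.continuousWithinAt
  have hmid : (a + b) / 2 ∈ uIcc a b := by
    convert mul_add_one_sub_mul_mem_uIcc (u := a) (v := b) (t := 1 / 2)
      ⟨by norm_num, by norm_num⟩ using 1
    ring
  have hsplit := intervalIntegral.integral_add_adjacent_intervals
    (hf_int.mono_set (uIcc_subset_uIcc_left hmid)) (hf_int.mono_set (uIcc_subset_uIcc_right hmid))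
  rw [add_comm b a, intervalIntegral.integral_symm ((a + b) / 2) b,
    show a - b = -(b - a) by ring, div_neg, neg_mul_neg] at hright
  rw [← hsplit]
  linear_combination (-1 / 2 : ℝ) * (hleft + hright)

theorem godunova_levin_power_mean_ineq_first_case_general
    (I : Set ℝ) (hI' : I.OrdConnected)
    (a b : ℝ) (ha : a ∈ I) (hb : b ∈ I) (hab : a < b)
    (f f' f'' : ℝ → ℝ)
    (hf' : ∀ x ∈ I, HasDerivAt f (f' x) x)
    (hf'' : ∀ x ∈ I, HasDerivAt f' (f'' x) x)
    (hint : IntervalIntegrable f'' volume a b)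
    (q : ℝ) (hq : 1 ≤ q)
    (hQ : GodunovaLevin I (fun x => |f'' x| ^ q))
    (lam : ℝ) (hlam0 : 0 ≤ lam) (hlam1 : lam ≤ 1 / 2) :
    |(lam - 1) * f ((a + b) / 2) - lam * (f a + f b) / 2
        + (1 / (b - a)) * ∫ x in a..b, f x|
      ≤ ((b - a) ^ 2 / 2) * (lam ^ 3 / 3 + (1 - 3 * lam) / 24) ^ (1 - 1 / q) *
        (((lam ^ 2 - (4 * lam - 1) / 8) * |f'' a| ^ q
            + ((1 - lam) * Real.log (2 * (1 - lam) ^ 2)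
                + (20 * lam - 8 * lam ^ 2 - 5) / 8) * |f'' b| ^ q) ^ (1 / q)
          + (((1 - lam) * Real.log (2 * (1 - lam) ^ 2)
                + (20 * lam - 8 * lam ^ 2 - 5) / 8) * |f'' a| ^ q
            + (lam ^ 2 - (4 * lam - 1) / 8) * |f'' b| ^ q) ^ (1 / q)) := by
  have hsub : uIcc a b ⊆ I := by rw [uIcc_of_le hab.le]; exact hI'.out ha hb
  rw [midpoint_trapezoid_combination_eq hab.ne (fun x hx => hf' x (hsub hx))
    (fun x hx => hf'' x (hsub hx)) hint, abs_mul, abs_of_nonneg (by positivity)]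
  have hJa := hQ.abs_integral_mul_sub_mul_le ha hb hab.ne hint.symm hq hlam0 hlam1
  have hJb := hQ.abs_integral_mul_sub_mul_le hb ha hab.ne' hint hq hlam0 hlam1
  calc _ ≤ (b - a) ^ 2 / 2 * (|∫ t in (0:ℝ)..1 / 2, t * (t - lam) * f'' (t * a + (1 - t) * b)|
        + |∫ t in (0:ℝ)..1 / 2, t * (t - lam) * f'' (t * b + (1 - t) * a)|) := by
        gcongr
        exact abs_add_le _ _
    _ ≤ _ := (mul_le_mul_of_nonneg_left (add_le_add hJa hJb) (by positivity)).trans_eq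
        (by rw [add_comm ((lam ^ 2 - (4 * lam - 1) / 8) * |f'' b| ^ q)]; ring)

theorem godunova_levin_power_mean_ineq_first_case
    (I : Set ℝ) (hI : IsOpen I) (hI' : I.OrdConnected)
    (a b : ℝ) (ha : a ∈ I) (hb : b ∈ I) (hab : a < b)
    (f f' f'' : ℝ → ℝ)
    (hf' : ∀ x ∈ I, HasDerivAt f (f' x) x)
    (hf'' : ∀ x ∈ I, HasDerivAt f' (f'' x) x)
    (hint : IntervalIntegrable f'' volume a b)
    (q : ℝ) (hq : 1 ≤ q)
    (hQ : GodunovaLevin I (fun x => |f'' x| ^ q))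
    (lam : ℝ) (hlam0 : 0 ≤ lam) (hlam1 : lam ≤ 1 / 2) :
    |(lam - 1) * f ((a + b) / 2) - lam * (f a + f b) / 2
        + (1 / (b - a)) * ∫ x in a..b, f x|
      ≤ ((b - a) ^ 2 / 2) * (lam ^ 3 / 3 + (1 - 3 * lam) / 24) ^ (1 - 1 / q) *
        (((lam ^ 2 - (4 * lam - 1) / 8) * |f'' a| ^ q
            + ((1 - lam) * Real.log (2 * (1 - lam) ^ 2)
                + (20 * lam - 8 * lam ^ 2 - 5) / 8) * |f'' b| ^ q) ^ (1 / q)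
          + (((1 - lam) * Real.log (2 * (1 - lam) ^ 2)
                + (20 * lam - 8 * lam ^ 2 - 5) / 8) * |f'' a| ^ q
            + (lam ^ 2 - (4 * lam - 1) / 8) * |f'' b| ^ q) ^ (1 / q)) :=
  godunova_levin_power_mean_ineq_first_case_general I hI' a b ha hb hab f f' f'' hf' hf'' hint q hq
    hQ lam hlam0 hlam1
end

section
/- Let I ⊂ ℝ be an open interval, a, b ∈ I with a < b, f : I → ℝ a twice differentiable mapping such that f'' is integrable on [a,b], let q ≥ 1, and suppose |f''|^q belongs to the Godunova-Levin class Q(I). If 1/2 ≤ λ ≤ 1, then |(λ − 1)·f((a+b)/2) − λ·(f(a)+f(b))/2 + (1/(b−a))·∫ₐᵇ f(x) dx| ≤ ((b−a)²/2) · ((3λ−1)/24)^(1 − 1/q) · { ( ((4λ−1)/8)·|f''(a)|^q + [(5−4λ)/8 − (λ−1)·ln(1/2)]·|f''(b)|^q )^(1/q) + ( [(5−4λ)/8 − (λ−1)·ln(1/2)]·|f''(a)|^q + ((4λ−1)/8)·|f''(b)|^q )^(1/q) }. -/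
/-!
Integrating by parts twice writes the left-hand side as
`-(∫₀ʰ k s * f'' (a + s) ds + ∫₀ʰ k s * f'' (b - s) ds)`, where `h = (b - a) / 2` and
`k s = λ s / 2 - s² / (2 (b - a))` is a Peano kernel, nonnegative on `[0, h]` because `λ ≥ 1/2`.
On each half, the weighted power-mean inequality with weight `k` gives
`|∫ k F| ≤ (∫ k) ^ (1 - 1/q) * (∫ k |F| ^ q) ^ (1/q)`, and the Godunova–Levin inequality
`|f'' x| ^ q ≤ |f'' a| ^ q (b - a) / (b - x) + |f'' b| ^ q (b - a) / (x - a)` reduces `∫ k |F| ^ q`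
to elementary integrals; the logarithm comes from `∫₀ʰ ds / (b - a - s) = log 2`.
-/

open MeasureTheory Set Real

theorem memLp_ofReal_of_integrable_rpow {α : Type*} [MeasurableSpace α] {μ : Measure α}
    {u : α → ℝ} {r : ℝ} (hr : 0 < r) (hu : AEStronglyMeasurable u μ) (hu0 : 0 ≤ᵐ[μ] u)
    (hur : Integrable (fun x => u x ^ r) μ) : MemLp u (ENNReal.ofReal r) μ := by
  refine (integrable_norm_rpow_iff hu (by simpa using hr) ENNReal.ofReal_ne_top).1 ?_
  rw [ENNReal.toReal_ofReal hr.le]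
  refine hur.congr ?_
  filter_upwards [hu0] with x hx
  rw [Real.norm_of_nonneg hx]

theorem integral_mul_le_weight_mul_Lp_of_nonneg {α : Type*} [MeasurableSpace α] {μ : Measure α}
    {w g : α → ℝ} {q : ℝ} (hq : 1 ≤ q) (hw : Integrable w μ) (hw0 : 0 ≤ᵐ[μ] w)
    (hg : AEStronglyMeasurable g μ) (hg0 : 0 ≤ᵐ[μ] g)
    (hwg : Integrable (fun x => w x * g x ^ q) μ) :
    ∫ x, w x * g x ∂μ ≤ (∫ x, w x ∂μ) ^ (1 - 1 / q) * (∫ x, w x * g x ^ q ∂μ) ^ (1 / q) := by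
  rcases hq.eq_or_lt with rfl | hq
  · simp
  set p := q.conjExponent
  have hpq : p.HolderConjugate q := (Real.HolderConjugate.conjExponent hq).symm
  -- Hölder for `w ^ (1 / p)` and `w ^ (1 / q) * g`
  have hF : (fun x => (w x ^ (1 / p)) ^ p) =ᵐ[μ] w := by
    filter_upwards [hw0] with x hx
    rw [one_div, Real.rpow_inv_rpow hx hpq.ne_zero]
  have hG : (fun x => (w x ^ (1 / q) * g x) ^ q) =ᵐ[μ] fun x => w x * g x ^ q := by
    filter_upwards [hw0, hg0] with x hx hgx
    rw [Real.mul_rpow (Real.rpow_nonneg hx _) hgx, one_div, Real.rpow_inv_rpow hx hpq.symm.ne_zero]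
  have hFG : (fun x => w x * g x) =ᵐ[μ] fun x => w x ^ (1 / p) * (w x ^ (1 / q) * g x) := by
    filter_upwards [hw0] with x hx
    rw [← mul_assoc, ← Real.rpow_add' hx (by simp [hpq.inv_add_inv_eq_one]), one_div, one_div,
      hpq.inv_add_inv_eq_one, Real.rpow_one]
  have hwm := hw.aestronglyMeasurable.aemeasurable
  calc ∫ x, w x * g x ∂μ
      = ∫ x, w x ^ (1 / p) * (w x ^ (1 / q) * g x) ∂μ := integral_congr_ae hFG
    _ ≤ (∫ x, (w x ^ (1 / p)) ^ p ∂μ) ^ (1 / p) *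
          (∫ x, (w x ^ (1 / q) * g x) ^ q ∂μ) ^ (1 / q) := by
      refine integral_mul_le_Lp_mul_Lq_of_nonneg hpq ?_ ?_ ?_ ?_
      · filter_upwards [hw0] with x hx using Real.rpow_nonneg hx _
      · filter_upwards [hw0, hg0] with x hx hgx using mul_nonneg (Real.rpow_nonneg hx _) hgx
      · exact memLp_ofReal_of_integrable_rpow hpq.pos (hwm.pow_const _).aestronglyMeasurable
          (by filter_upwards [hw0] with x hx using Real.rpow_nonneg hx _) (hw.congr hF.symm)
      · exact memLp_ofReal_of_integrable_rpow hpq.symm.pos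
          ((hwm.pow_const _).aestronglyMeasurable.mul hg)
          (by filter_upwards [hw0, hg0] with x hx hgx using mul_nonneg (Real.rpow_nonneg hx _) hgx)
          (hwg.congr hG.symm)
    _ = (∫ x, w x ∂μ) ^ (1 - 1 / q) * (∫ x, w x * g x ^ q ∂μ) ^ (1 / q) := by
      rw [integral_congr_ae hF, integral_congr_ae hG, one_div q, hpq.symm.one_sub_inv, one_div]

theorem intervalIntegral.integral_mul_deriv_deriv_eq_deriv_deriv_mul {a b : ℝ}
    {u u' u'' v v' v'' : ℝ → ℝ}
    (hu : ∀ x ∈ uIcc a b, HasDerivAt u (u' x) x)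
    (hu' : ∀ x ∈ uIcc a b, HasDerivAt u' (u'' x) x)
    (hv : ∀ x ∈ uIcc a b, HasDerivAt v (v' x) x)
    (hv' : ∀ x ∈ uIcc a b, HasDerivAt v' (v'' x) x)
    (hu'' : IntervalIntegrable u'' volume a b) (hv'' : IntervalIntegrable v'' volume a b) :
    ∫ x in a..b, u x * v'' x =
      u b * v' b - u a * v' a - (u' b * v b - u' a * v a) + ∫ x in a..b, u'' x * v x := by
  have hcont : ∀ {φ φ' : ℝ → ℝ}, (∀ x ∈ uIcc a b, HasDerivAt φ (φ' x) x) →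
      IntervalIntegrable φ volume a b := fun h =>
    ContinuousOn.intervalIntegrable fun x hx => (h x hx).continuousAt.continuousWithinAt
  rw [integral_mul_deriv_eq_deriv_mul hu hv' (hcont hu') hv'',
    integral_mul_deriv_eq_deriv_mul hu' hv hu'' (hcont hv')]
  ring

theorem GodunovaLevin.le_of_mem_Ioo {I : Set ℝ} {g : ℝ → ℝ} (hg : GodunovaLevin I g)
    {a b x : ℝ} (ha : a ∈ I) (hb : b ∈ I) (hx : x ∈ Ioo a b) :
    g x ≤ g a * (b - a) / (b - x) + g b * (b - a) / (x - a) := by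
  obtain ⟨hax, hxb⟩ := hx
  have hba : 0 < b - a := by linarith
  have h := hg.2 a ha b hb ((b - x) / (b - a)) (div_pos (by linarith) hba)
    ((div_lt_one hba).2 (by linarith))
  have hx : (b - x) / (b - a) * a + (1 - (b - x) / (b - a)) * b = x := by
    field_simp; ring
  have h1 : 1 - (b - x) / (b - a) = (x - a) / (b - a) := by
    field_simp; ring
  rwa [hx, h1, div_div_eq_mul_div, div_div_eq_mul_div] at h

theorem IntervalIntegrable.comp_add_left_half {f : ℝ → ℝ} {a b : ℝ} (hab : a ≤ b)
    (hf : IntervalIntegrable f volume a b) :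
    IntervalIntegrable (fun s => f (a + s)) volume 0 ((b - a) / 2) :=
  (sub_self a ▸ hf.comp_add_left a).mono_set <| uIcc_subset_uIcc left_mem_uIcc <| by
    rw [uIcc_of_le (sub_nonneg.2 hab)]; constructor <;> linarith

theorem IntervalIntegrable.comp_sub_left_half {f : ℝ → ℝ} {a b : ℝ} (hab : a ≤ b)
    (hf : IntervalIntegrable f volume a b) :
    IntervalIntegrable (fun s => f (b - s)) volume 0 ((b - a) / 2) :=
  (sub_self b ▸ (hf.comp_sub_left b).symm).mono_set <| uIcc_subset_uIcc left_mem_uIcc <| by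
    rw [uIcc_of_le (sub_nonneg.2 hab)]; constructor <;> linarith

noncomputable def peanoKernel (D lam s : ℝ) : ℝ := lam / 2 * s - s ^ 2 / (2 * D)

theorem hasDerivAt_peanoKernel (D lam s : ℝ) :
    HasDerivAt (peanoKernel D lam) (lam / 2 - s / D) s :=
  (((hasDerivAt_id s).const_mul (lam / 2)).sub ((hasDerivAt_pow 2 s).div_const (2 * D))).congr_deriv
    (by push_cast; ring)

theorem peanoKernel_nonneg {D lam s : ℝ} (hD : 0 < D) (hs : 0 ≤ s) (hsD : s ≤ lam * D) :
    0 ≤ peanoKernel D lam s := by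
  have : peanoKernel D lam s = s * (lam * D - s) / (2 * D) := by
    unfold peanoKernel; field_simp
  rw [this]
  exact div_nonneg (mul_nonneg hs (by linarith)) (by positivity)

theorem integral_peanoKernel {D : ℝ} (hD : D ≠ 0) (lam : ℝ) :
    ∫ s in 0..D / 2, peanoKernel D lam s = D ^ 2 / 2 * ((3 * lam - 1) / 24) := by
  unfold peanoKernel
  rw [intervalIntegral.integral_sub (by apply Continuous.intervalIntegrable; fun_prop)
      (by apply Continuous.intervalIntegrable; fun_prop),
    intervalIntegral.integral_const_mul, intervalIntegral.integral_div, integral_id, integral_pow]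
  field_simp
  ring

-- For `0 < s < D` the integrand is `peanoKernel D lam s * (A * D / (D - s) + B * D / s)`.
theorem integral_peanoKernel_majorant {D : ℝ} (hD : 0 < D) (lam A B : ℝ) :
    ∫ s in 0..D / 2, (lam * D - s) / 2 * (A * s / (D - s) + B) =
      D ^ 2 / 2 * (((5 - 4 * lam) / 8 - (lam - 1) * Real.log (1 / 2)) * A
        + (4 * lam - 1) / 8 * B) := by
  have hs : ∀ s ∈ uIcc 0 (D / 2), D - s ≠ 0 := by
    intro s hs
    rw [uIcc_of_le (by positivity)] at hs
    linarith [hs.2]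
  have hsplit : ∀ s ∈ uIcc 0 (D / 2), (lam * D - s) / 2 * (A * s / (D - s) + B) =
      (A - B) / 2 * s + (A * (1 - lam) + B * lam) * D / 2
        - A * (1 - lam) * D ^ 2 / 2 * (D - s)⁻¹ := by
    intro s h
    have := hs s h
    field_simp
    ring
  have hinv : ∫ s in 0..D / 2, (D - s)⁻¹ = -Real.log (1 / 2) := by
    rw [intervalIntegral.integral_comp_sub_left (fun x => x⁻¹), integral_inv]
    · rw [sub_zero, show D - D / 2 = D / 2 by ring, div_div_eq_mul_div,
        mul_div_cancel_left₀ _ hD.ne', one_div, Real.log_inv, neg_neg]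
    · rw [uIcc_of_le (by linarith)]
      intro h
      linarith [h.1]
  rw [intervalIntegral.integral_congr hsplit,
    intervalIntegral.integral_sub (by apply Continuous.intervalIntegrable; fun_prop)
      (by apply ContinuousOn.intervalIntegrable; fun_prop (disch := assumption)),
    intervalIntegral.integral_add (by apply Continuous.intervalIntegrable; fun_prop)
      (by apply Continuous.intervalIntegrable; fun_prop),
    intervalIntegral.integral_const_mul, intervalIntegral.integral_const_mul, integral_id,
    intervalIntegral.integral_const, hinv, smul_eq_mul]
  ring

theorem midpoint_trapezoid_sub_average_eq_integral_peanoKernel {f f' f'' : ℝ → ℝ} {a b : ℝ}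
    (hab : a < b) (hf : ∀ x ∈ Icc a b, HasDerivAt f (f' x) x)
    (hf' : ∀ x ∈ Icc a b, HasDerivAt f' (f'' x) x) (hf'' : IntervalIntegrable f'' volume a b)
    (lam : ℝ) :
    (lam - 1) * f ((a + b) / 2) - lam * (f a + f b) / 2 + 1 / (b - a) * ∫ x in a..b, f x =
      -((∫ s in 0..(b - a) / 2, peanoKernel (b - a) lam s * f'' (a + s)) +
        ∫ s in 0..(b - a) / 2, peanoKernel (b - a) lam s * f'' (b - s)) := by
  set D := b - a
  have hD0 : D ≠ 0 := sub_ne_zero.2 hab.ne'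
  have hh : 0 ≤ D / 2 := by linarith
  have hleft : ∀ s ∈ uIcc 0 (D / 2), a + s ∈ Icc a b := by
    rw [uIcc_of_le hh]; rintro s ⟨h0, h1⟩; constructor <;> linarith
  have hright : ∀ s ∈ uIcc 0 (D / 2), b - s ∈ Icc a b := by
    rw [uIcc_of_le hh]; rintro s ⟨h0, h1⟩; constructor <;> linarith
  have hk := fun s (_ : s ∈ uIcc 0 (D / 2)) => hasDerivAt_peanoKernel D lam s
  have hk' : ∀ s ∈ uIcc 0 (D / 2), HasDerivAt (fun s => lam / 2 - s / D) (-1 / D) s := by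
    intro s _
    simpa [neg_div] using ((hasDerivAt_id s).div_const D).const_sub (lam / 2)
  have hL := intervalIntegral.integral_mul_deriv_deriv_eq_deriv_deriv_mul hk hk'
    (fun s hs => (hf _ (hleft s hs)).comp_const_add a s)
    (fun s hs => (hf' _ (hleft s hs)).comp_const_add a s)
    intervalIntegrable_const (hf''.comp_add_left_half hab.le)
  have hR := intervalIntegral.integral_mul_deriv_deriv_eq_deriv_deriv_mul hk hk'
    (fun s hs => (hf _ (hright s hs)).comp_const_sub b s)
    (fun s hs => ((hf' _ (hright s hs)).comp_const_sub b s).fun_neg.congr_deriv (neg_neg _))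
    intervalIntegrable_const (hf''.comp_sub_left_half hab.le)
  have hfi : IntervalIntegrable f volume a b :=
    ContinuousOn.intervalIntegrable fun x hx =>
      (hf x (by rwa [uIcc_of_le hab.le] at hx)).continuousAt.continuousWithinAt
  have hsplit : (∫ x in a..a + D / 2, f x) + ∫ x in b - D / 2..b, f x = ∫ x in a..b, f x := by
    have hm : a + D / 2 ∈ uIcc a b := by
      rw [uIcc_of_le hab.le]; constructor <;> linarith
    rw [show b - D / 2 = a + D / 2 by ring]
    exact intervalIntegral.integral_add_adjacent_intervals
      (hfi.mono_set (uIcc_subset_uIcc left_mem_uIcc hm))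
      (hfi.mono_set (uIcc_subset_uIcc hm right_mem_uIcc))
  rw [hL, hR, intervalIntegral.integral_const_mul, intervalIntegral.integral_const_mul,
    intervalIntegral.integral_comp_add_left f, intervalIntegral.integral_comp_sub_left f,
    ← hsplit]
  simp only [peanoKernel, add_zero, sub_zero]
  rw [show a + D / 2 = (a + b) / 2 by ring, show b - D / 2 = (a + b) / 2 by ring]
  field_simp
  ring

theorem abs_integral_peanoKernel_mul_le {D lam q A B : ℝ} {F : ℝ → ℝ} (hD : 0 < D)
    (hlam : 1 / 2 ≤ lam) (hq : 1 ≤ q) (hF : IntervalIntegrable F volume 0 (D / 2))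
    (hFq : ∀ s ∈ Ioc 0 (D / 2), |F s| ^ q ≤ A * D / (D - s) + B * D / s) :
    |∫ s in 0..D / 2, peanoKernel D lam s * F s| ≤
      D ^ 2 / 2 * ((3 * lam - 1) / 24) ^ (1 - 1 / q) *
        (((5 - 4 * lam) / 8 - (lam - 1) * Real.log (1 / 2)) * A + (4 * lam - 1) / 8 * B)
          ^ (1 / q) := by
  set k := peanoKernel D lam
  set X := ((5 - 4 * lam) / 8 - (lam - 1) * Real.log (1 / 2)) * A + (4 * lam - 1) / 8 * B
  set M : ℝ → ℝ := fun s => (lam * D - s) / 2 * (A * s / (D - s) + B)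
  have hh : 0 ≤ D / 2 := by positivity
  have hk0 : ∀ s ∈ Icc 0 (D / 2), 0 ≤ k s := fun s hs =>
    peanoKernel_nonneg hD hs.1 (by nlinarith [hs.2])
  have hkM : ∀ s ∈ Ioc 0 (D / 2), k s * |F s| ^ q ≤ M s := by
    intro s hs
    have hs0 : s ≠ 0 := hs.1.ne'
    have hDs : D - s ≠ 0 := by linarith [hs.2]
    calc k s * |F s| ^ q ≤ k s * (A * D / (D - s) + B * D / s) :=
          mul_le_mul_of_nonneg_left (hFq s hs) (hk0 s (Ioc_subset_Icc_self hs))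
      _ = M s := by simp only [k, M, peanoKernel]; field_simp
  have hkint : IntegrableOn k (Ioc 0 (D / 2)) :=
    (Continuous.intervalIntegrable (continuous_iff_continuousAt.2 fun s =>
      (hasDerivAt_peanoKernel D lam s).continuousAt) 0 (D / 2)).1
  have hkD : ∫ s in Ioc 0 (D / 2), k s = D ^ 2 / 2 * ((3 * lam - 1) / 24) := by
    rw [← intervalIntegral.integral_of_le hh]
    exact integral_peanoKernel hD.ne' lam
  have hMint : IntegrableOn M (Ioc 0 (D / 2)) := by
    refine (ContinuousOn.intervalIntegrable ?_).1
    rw [uIcc_of_le hh]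
    exact ContinuousOn.mul (by fun_prop) <| ContinuousOn.add (ContinuousOn.div (by fun_prop)
      (by fun_prop) fun s hs => by linarith [hs.2]) continuousOn_const
  have hFm : AEStronglyMeasurable (fun s => |F s|) (volume.restrict (Ioc 0 (D / 2))) :=
    hF.1.aestronglyMeasurable.norm
  have hkFint : IntegrableOn (fun s => k s * |F s| ^ q) (Ioc 0 (D / 2)) := by
    refine hMint.mono' (hkint.aestronglyMeasurable.mul
      (hFm.aemeasurable.pow_const q).aestronglyMeasurable) ?_
    filter_upwards [ae_restrict_mem measurableSet_Ioc] with s hs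
    rw [Real.norm_of_nonneg (mul_nonneg (hk0 s (Ioc_subset_Icc_self hs)) (by positivity))]
    exact hkM s hs
  have hkFq : ∫ s in Ioc 0 (D / 2), k s * |F s| ^ q ≤ D ^ 2 / 2 * X := by
    rw [← integral_peanoKernel_majorant hD, intervalIntegral.integral_of_le hh]
    exact setIntegral_mono_on hkFint hMint measurableSet_Ioc hkM
  have hkFq0 : 0 ≤ ∫ s in Ioc 0 (D / 2), k s * |F s| ^ q :=
    setIntegral_nonneg measurableSet_Ioc fun s hs =>
      mul_nonneg (hk0 s (Ioc_subset_Icc_self hs)) (by positivity)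
  have hX : 0 ≤ X := nonneg_of_mul_nonneg_right (hkFq0.trans hkFq) (by positivity)
  have hpm := integral_mul_le_weight_mul_Lp_of_nonneg hq hkint
    (by filter_upwards [ae_restrict_mem measurableSet_Ioc] with s hs
        exact hk0 s (Ioc_subset_Icc_self hs))
    hFm (Filter.Eventually.of_forall fun s => abs_nonneg (F s)) hkFint
  rw [hkD] at hpm
  have hH : (0 : ℝ) ≤ D ^ 2 / 2 := by positivity
  have hc : (0 : ℝ) ≤ (3 * lam - 1) / 24 := by linarith
  calc |∫ s in 0..D / 2, k s * F s| ≤ ∫ s in 0..D / 2, |k s * F s| :=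
        intervalIntegral.abs_integral_le_integral_abs hh
    _ = ∫ s in Ioc 0 (D / 2), k s * |F s| := by
        rw [intervalIntegral.integral_of_le hh]
        refine setIntegral_congr_fun measurableSet_Ioc fun s hs => ?_
        rw [abs_mul, abs_of_nonneg (hk0 s (Ioc_subset_Icc_self hs))]
    _ ≤ (D ^ 2 / 2 * ((3 * lam - 1) / 24)) ^ (1 - 1 / q) *
          (∫ s in Ioc 0 (D / 2), k s * |F s| ^ q) ^ (1 / q) := hpm
    _ ≤ (D ^ 2 / 2 * ((3 * lam - 1) / 24)) ^ (1 - 1 / q) * (D ^ 2 / 2 * X) ^ (1 / q) := by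
        gcongr
    _ = D ^ 2 / 2 * ((3 * lam - 1) / 24) ^ (1 - 1 / q) * X ^ (1 / q) := by
        rw [Real.mul_rpow hH hc, Real.mul_rpow hH hX, mul_mul_mul_comm,
          ← Real.rpow_add' hH (by simp), sub_add_cancel, Real.rpow_one, mul_assoc]

theorem godunova_levin_power_mean_ineq_second_case_general
    (I : Set ℝ) (hI' : I.OrdConnected)
    (a b : ℝ) (ha : a ∈ I) (hb : b ∈ I) (hab : a < b)
    (f f' f'' : ℝ → ℝ)
    (hf' : ∀ x ∈ I, HasDerivAt f (f' x) x)
    (hf'' : ∀ x ∈ I, HasDerivAt f' (f'' x) x)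
    (hint : IntervalIntegrable f'' volume a b)
    (q : ℝ) (hq : 1 ≤ q)
    (hQ : GodunovaLevin I (fun x => |f'' x| ^ q))
    (lam : ℝ) (hlam0 : 1 / 2 ≤ lam) :
    |(lam - 1) * f ((a + b) / 2) - lam * (f a + f b) / 2
        + (1 / (b - a)) * ∫ x in a..b, f x|
      ≤ ((b - a) ^ 2 / 2) * ((3 * lam - 1) / 24) ^ (1 - 1 / q) *
        ((((4 * lam - 1) / 8) * |f'' a| ^ q
            + ((5 - 4 * lam) / 8 - (lam - 1) * Real.log (1 / 2)) * |f'' b| ^ q) ^ (1 / q)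
          + (((5 - 4 * lam) / 8 - (lam - 1) * Real.log (1 / 2)) * |f'' a| ^ q
            + ((4 * lam - 1) / 8) * |f'' b| ^ q) ^ (1 / q)) := by
  have hsub : Icc a b ⊆ I := hI'.out ha hb
  have hD : 0 < b - a := sub_pos.2 hab
  have hmem : ∀ s ∈ Ioc 0 ((b - a) / 2), a + s ∈ Ioo a b ∧ b - s ∈ Ioo a b := by
    rintro s ⟨h0, h1⟩
    exact ⟨⟨by linarith, by linarith⟩, ⟨by linarith, by linarith⟩⟩
  rw [midpoint_trapezoid_sub_average_eq_integral_peanoKernel hab (fun x hx => hf' x (hsub hx))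
    (fun x hx => hf'' x (hsub hx)) hint, abs_neg]
  have hleft := abs_integral_peanoKernel_mul_le hD hlam0 hq (hint.comp_add_left_half hab.le)
    fun s hs => by
      have := hQ.le_of_mem_Ioo ha hb (hmem s hs).1
      rwa [add_sub_cancel_left, sub_add_eq_sub_sub] at this
  have hright := abs_integral_peanoKernel_mul_le hD hlam0 hq (hint.comp_sub_left_half hab.le)
    fun s hs => by
      have := hQ.le_of_mem_Ioo ha hb (hmem s hs).2
      rwa [sub_sub_cancel, sub_right_comm, add_comm] at this
  calc _ ≤ _ := (abs_add_le _ _).trans (add_le_add hleft hright)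
    _ = _ := by rw [add_comm (_ * |f'' b| ^ q)]; ring

theorem godunova_levin_power_mean_ineq_second_case
    (I : Set ℝ) (hI : IsOpen I) (hI' : I.OrdConnected)
    (a b : ℝ) (ha : a ∈ I) (hb : b ∈ I) (hab : a < b)
    (f f' f'' : ℝ → ℝ)
    (hf' : ∀ x ∈ I, HasDerivAt f (f' x) x)
    (hf'' : ∀ x ∈ I, HasDerivAt f' (f'' x) x)
    (hint : IntervalIntegrable f'' volume a b)
    (q : ℝ) (hq : 1 ≤ q)
    (hQ : GodunovaLevin I (fun x => |f'' x| ^ q))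
    (lam : ℝ) (hlam0 : 1 / 2 ≤ lam) (hlam1 : lam ≤ 1) :
    |(lam - 1) * f ((a + b) / 2) - lam * (f a + f b) / 2
        + (1 / (b - a)) * ∫ x in a..b, f x|
      ≤ ((b - a) ^ 2 / 2) * ((3 * lam - 1) / 24) ^ (1 - 1 / q) *
        ((((4 * lam - 1) / 8) * |f'' a| ^ q
            + ((5 - 4 * lam) / 8 - (lam - 1) * Real.log (1 / 2)) * |f'' b| ^ q) ^ (1 / q)
          + (((5 - 4 * lam) / 8 - (lam - 1) * Real.log (1 / 2)) * |f'' a| ^ q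
            + ((4 * lam - 1) / 8) * |f'' b| ^ q) ^ (1 / q)) :=
  godunova_levin_power_mean_ineq_second_case_general I hI' a b ha hb hab f f' f'' hf' hf'' hint q hq
    hQ lam hlam0
end

section
/- Let I ⊂ ℝ be an open interval, a, b ∈ I with a < b, f : I → ℝ a twice differentiable mapping such that f'' is integrable on [a,b], and suppose |f''| belongs to the Godunova-Levin class Q(I). If 1/2 ≤ λ ≤ 1, then |(λ − 1)·f((a+b)/2) − λ·(f(a)+f(b))/2 + (1/(b−a))·∫ₐᵇ f(x) dx| ≤ ((b−a)²/2) · [(λ−1)·ln 2 + 1/2] · (|f''(a)| + |f''(b)|). -/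
open MeasureTheory Set Real

/-!
Put `h = b - a`, `c = λ h` and `k t = t (t - c) / 2`, so that `k'' = 1`. Integrating by parts
twice against `φ t = f (a + t) + f (b - t)` on `[0, h/2]` (where `φ' (h/2) = 0`) gives
`∫₀^{h/2} k t (f'' (a + t) + f'' (b - t)) dt = h ((λ - 1) f ((a + b)/2) - λ (f a + f b)/2) + ∫ₐᵇ f`.
Since `λ ≥ 1/2`, `k ≤ 0` on `[0, h/2]`. Writing `a + t` and `b - t` as convex combinations of
`a` and `b`, the Godunova–Levin inequality bounds `|f'' (a + t)| + |f'' (b - t)|` by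
`(|f'' a| + |f'' b|) h² / (t (h - t))`; the factor `t` cancels against `k t`, and the remaining
integral `∫₀^{h/2} (c - t) / (2 (h - t)) dt = h/4 + (c - h)/2 · log 2` yields the constant.
-/

namespace GodunovaLevin

variable {I : Set ℝ} {g : ℝ → ℝ} {a b : ℝ}

theorem le_of_mem_Ioo_s4 (hg : GodunovaLevin I g) (ha : a ∈ I) (hb : b ∈ I) {x : ℝ}
    (hx : x ∈ Ioo a b) :
    g x ≤ g a * (b - a) / (b - x) + g b * (b - a) / (x - a) := by
  obtain ⟨hax, hxb⟩ := hx
  have hba : 0 < b - a := by linarith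
  have hGL := hg.2 a ha b hb ((b - x) / (b - a)) (div_pos (by linarith) hba)
    ((div_lt_one hba).mpr (by linarith))
  have hcomb : (b - x) / (b - a) * a + (1 - (b - x) / (b - a)) * b = x := by
    field_simp; ring
  have hl : 1 - (b - x) / (b - a) = (x - a) / (b - a) := by
    field_simp; ring
  rwa [hcomb, hl, div_div_eq_mul_div, div_div_eq_mul_div] at hGL

theorem add_reflect_le (hg : GodunovaLevin I g) (ha : a ∈ I) (hb : b ∈ I) {t : ℝ}
    (ht₀ : 0 < t) (ht : t < b - a) :
    g (a + t) + g (b - t) ≤ (g a + g b) * (b - a) ^ 2 / (t * (b - a - t)) := by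
  have h₁ := hg.le_of_mem_Ioo_s4 ha hb (x := a + t) ⟨by linarith, by linarith⟩
  have h₂ := hg.le_of_mem_Ioo_s4 ha hb (x := b - t) ⟨by linarith, by linarith⟩
  have hs : 0 < b - a - t := by linarith
  calc g (a + t) + g (b - t)
      ≤ g a * (b - a) / (b - (a + t)) + g b * (b - a) / (a + t - a)
        + (g a * (b - a) / (b - (b - t)) + g b * (b - a) / (b - t - a)) := add_le_add h₁ h₂
    _ = (g a + g b) * (b - a) ^ 2 / (t * (b - a - t)) := by
      rw [show b - (a + t) = b - a - t by ring, show b - t - a = b - a - t by ring,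
        add_sub_cancel_left, sub_sub_cancel]
      field_simp
      ring

end GodunovaLevin

theorem integral_mul_deriv_deriv_eq_s4 {u v : ℝ} {K K' φ φ' φ'' : ℝ → ℝ}
    (hK : ∀ x ∈ uIcc u v, HasDerivAt K (K' x) x) (hK' : ∀ x ∈ uIcc u v, HasDerivAt K' 1 x)
    (hφ : ∀ x ∈ uIcc u v, HasDerivAt φ (φ' x) x)
    (hφ' : ∀ x ∈ uIcc u v, HasDerivAt φ' (φ'' x) x)
    (hint : IntervalIntegrable (fun x => K x * φ'' x) volume u v) :
    ∫ x in u..v, K x * φ'' x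
      = K v * φ' v - K' v * φ v - (K u * φ' u - K' u * φ u) + ∫ x in u..v, φ x := by
  have hφint : IntervalIntegrable φ volume u v :=
    ContinuousOn.intervalIntegrable fun x hx => (hφ x hx).continuousAt.continuousWithinAt
  have hftc : ∫ x in u..v, (K x * φ'' x - φ x)
      = K v * φ' v - K' v * φ v - (K u * φ' u - K' u * φ u) := by
    refine intervalIntegral.integral_eq_sub_of_hasDerivAt (f := fun x => K x * φ' x - K' x * φ x)
      (fun x hx => ?_) (hint.sub hφint)
    exact (((hK x hx).mul (hφ' x hx)).sub ((hK' x hx).mul (hφ x hx))).congr_deriv (by ring)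
  rw [← hftc, intervalIntegral.integral_sub hint hφint]
  ring

theorem IntervalIntegrable.kernel_mul_reflect {u : ℝ → ℝ} {a b : ℝ} (hab : a ≤ b) (c : ℝ)
    (hu : IntervalIntegrable u volume a b) :
    IntervalIntegrable (fun t => t * (t - c) / 2 * (u (a + t) + u (b - t))) volume 0
      ((b - a) / 2) := by
  have hsum : IntervalIntegrable (fun t => u (a + t) + u (b - t)) volume 0 (b - a) :=
    (by simpa using hu.comp_add_left a : IntervalIntegrable _ _ _ _).add
      (by simpa using (hu.comp_sub_left b).symm)
  exact (hsum.mono_set (uIcc_subset_uIcc_left (mem_uIcc_of_le (by linarith) (by linarith))))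
    |>.continuousOn_mul (by fun_prop)

theorem integral_kernel_mul_reflect_eq {f f' f'' : ℝ → ℝ} {a b : ℝ} (hab : a ≤ b) (c : ℝ)
    (hf : ∀ x ∈ Icc a b, HasDerivAt f (f' x) x) (hf' : ∀ x ∈ Icc a b, HasDerivAt f' (f'' x) x)
    (hint : IntervalIntegrable f'' volume a b) :
    ∫ t in 0..(b - a) / 2, t * (t - c) / 2 * (f'' (a + t) + f'' (b - t))
      = (c - (b - a)) * f ((a + b) / 2) - c * (f a + f b) / 2 + ∫ x in a..b, f x := by
  set s := (b - a) / 2 with hs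
  have hs₀ : 0 ≤ s := by positivity
  have hm₁ : a + s = (a + b) / 2 := by rw [hs]; ring
  have hm₂ : b - s = (a + b) / 2 := by rw [hs]; ring
  have hmem : ∀ t ∈ uIcc 0 s, a + t ∈ Icc a b ∧ b - t ∈ Icc a b := by
    intro t ht
    rw [uIcc_of_le hs₀] at ht
    exact ⟨⟨by linarith [ht.1], by linarith [ht.2]⟩, ⟨by linarith [ht.2], by linarith [ht.1]⟩⟩
  have hK (t : ℝ) : HasDerivAt (fun t => t * (t - c) / 2) (t - c / 2) t :=
    (((hasDerivAt_id t).mul ((hasDerivAt_id t).sub_const c)).div_const 2).congr_deriv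
      (by simp only [id_eq]; ring)
  have hK' (t : ℝ) : HasDerivAt (fun t => t - c / 2) 1 t := (hasDerivAt_id t).sub_const _
  have hφ : ∀ t ∈ uIcc 0 s,
      HasDerivAt (fun t => f (a + t) + f (b - t)) (f' (a + t) - f' (b - t)) t := fun t ht =>
    ((hf _ (hmem t ht).1).comp_const_add a t).add ((hf _ (hmem t ht).2).comp_const_sub b t)
  have hφ' : ∀ t ∈ uIcc 0 s,
      HasDerivAt (fun t => f' (a + t) - f' (b - t)) (f'' (a + t) + f'' (b - t)) t :=
    fun t ht => (((hf' _ (hmem t ht).1).comp_const_add a t).sub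
      ((hf' _ (hmem t ht).2).comp_const_sub b t)).congr_deriv (sub_neg_eq_add _ _)
  have hfint : IntervalIntegrable f volume a b :=
    ContinuousOn.intervalIntegrable fun x hx =>
      (hf x (by rwa [uIcc_of_le hab] at hx)).continuousAt.continuousWithinAt
  have hm : (a + b) / 2 ∈ uIcc a b := Icc_subset_uIcc (hm₁ ▸ (hmem s right_mem_uIcc).1)
  have hfint₁ : IntervalIntegrable f volume a (a + s) :=
    hm₁ ▸ hfint.mono_set (uIcc_subset_uIcc_left hm)
  have hfint₂ : IntervalIntegrable f volume (b - s) b :=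
    hm₂ ▸ hfint.mono_set (uIcc_subset_uIcc_right hm)
  rw [integral_mul_deriv_deriv_eq_s4 (fun t _ => hK t) (fun t _ => hK' t) hφ hφ'
      (hint.kernel_mul_reflect hab c),
    intervalIntegral.integral_add (by simpa using hfint₁.comp_add_left a)
      (by simpa using (hfint₂.comp_sub_left b).symm),
    intervalIntegral.integral_comp_add_left, intervalIntegral.integral_comp_sub_left,
    ← intervalIntegral.integral_add_adjacent_intervals hfint₁ (hm₁.trans hm₂.symm ▸ hfint₂)]
  simp only [add_zero, sub_zero, hm₁, hm₂]
  ring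

theorem continuousOn_div_sub {h c : ℝ} (hh : 0 < h) :
    ContinuousOn (fun t => (c - t) / (2 * (h - t))) (uIcc 0 (h / 2)) := by
  refine ContinuousOn.div (by fun_prop) (by fun_prop) fun t ht => ?_
  rw [uIcc_of_le (by positivity)] at ht
  nlinarith [ht.2]

theorem integral_div_sub (h c : ℝ) (hh : 0 < h) :
    ∫ t in 0..h / 2, (c - t) / (2 * (h - t)) = h / 4 + (c - h) / 2 * log 2 := by
  have hderiv : ∀ t ∈ uIcc 0 (h / 2),
      HasDerivAt (fun t => t / 2 - (c - h) / 2 * log (h - t)) ((c - t) / (2 * (h - t))) t := by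
    intro t ht
    rw [uIcc_of_le (by positivity)] at ht
    have hht : h - t ≠ 0 := by linarith [ht.2]
    have := ((hasDerivAt_id t).div_const 2).sub
      ((((hasDerivAt_id t).const_sub h).log hht).const_mul ((c - h) / 2))
    refine this.congr_deriv ?_
    simp only [id_eq]
    field_simp
    ring
  rw [intervalIntegral.integral_eq_sub_of_hasDerivAt hderiv
    (continuousOn_div_sub hh).intervalIntegrable]
  have hhalf : h - h / 2 = h / 2 := by ring
  rw [hhalf, log_div hh.ne' two_ne_zero]
  simp only [sub_zero]
  ring

theorem abs_kernel_mul_reflect_le {I : Set ℝ} {u : ℝ → ℝ} {a b c t : ℝ}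
    (hu : GodunovaLevin I fun x => |u x|) (ha : a ∈ I) (hb : b ∈ I) (hab : a < b)
    (hc : (b - a) / 2 ≤ c) (ht : t ∈ Icc 0 ((b - a) / 2)) :
    |t * (t - c) / 2 * (u (a + t) + u (b - t))|
      ≤ (|u a| + |u b|) * (b - a) ^ 2 * ((c - t) / (2 * (b - a - t))) := by
  obtain ⟨ht₀, ht₁⟩ := ht
  have hct : 0 ≤ c - t := by linarith
  have hbt : 0 < b - a - t := by linarith
  have hkernel : |t * (t - c) / 2 * (u (a + t) + u (b - t))|
      ≤ t * (c - t) / 2 * (|u (a + t)| + |u (b - t)|) := by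
    rw [abs_mul, show |t * (t - c) / 2| = t * (c - t) / 2 by
      rw [abs_of_nonpos (by nlinarith)]; ring]
    gcongr
    exact abs_add_le _ _
  rcases ht₀.eq_or_lt with rfl | ht₀
  · simp only [zero_mul, zero_div, add_zero, sub_zero, abs_zero]
    have : 0 ≤ c / (2 * (b - a)) := div_nonneg (by linarith) (by linarith)
    positivity
  calc _ ≤ t * (c - t) / 2 * (|u (a + t)| + |u (b - t)|) := hkernel
    _ ≤ t * (c - t) / 2 * ((|u a| + |u b|) * (b - a) ^ 2 / (t * (b - a - t))) := by
      gcongr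
      exact hu.add_reflect_le ha hb ht₀ (by linarith)
    _ = (|u a| + |u b|) * (b - a) ^ 2 * ((c - t) / (2 * (b - a - t))) := by
      field_simp

theorem abs_integral_kernel_mul_reflect_le {I : Set ℝ} {u : ℝ → ℝ} {a b c : ℝ}
    (hu : GodunovaLevin I fun x => |u x|) (ha : a ∈ I) (hb : b ∈ I) (hab : a < b)
    (hc : (b - a) / 2 ≤ c) (hint : IntervalIntegrable u volume a b) :
    |∫ t in 0..(b - a) / 2, t * (t - c) / 2 * (u (a + t) + u (b - t))|
      ≤ (|u a| + |u b|) * (b - a) ^ 2 * ((b - a) / 4 + (c - (b - a)) / 2 * log 2) := by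
  have hh : 0 < b - a := sub_pos.mpr hab
  calc _ ≤ ∫ t in 0..(b - a) / 2, |t * (t - c) / 2 * (u (a + t) + u (b - t))| :=
        intervalIntegral.abs_integral_le_integral_abs (by positivity)
    _ ≤ ∫ t in 0..(b - a) / 2, (|u a| + |u b|) * (b - a) ^ 2 * ((c - t) / (2 * (b - a - t))) :=
        intervalIntegral.integral_mono_on (by positivity) (hint.kernel_mul_reflect hab.le c).abs
          ((continuousOn_div_sub hh).intervalIntegrable.const_mul _)
          fun t ht => abs_kernel_mul_reflect_le hu ha hb hab hc ht
    _ = _ := by rw [intervalIntegral.integral_const_mul, integral_div_sub _ _ hh]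

theorem godunova_levin_corollary_second_case_general
    (I : Set ℝ) (hI' : I.OrdConnected)
    (a b : ℝ) (ha : a ∈ I) (hb : b ∈ I) (hab : a < b)
    (f f' f'' : ℝ → ℝ)
    (hf' : ∀ x ∈ I, HasDerivAt f (f' x) x)
    (hf'' : ∀ x ∈ I, HasDerivAt f' (f'' x) x)
    (hint : IntervalIntegrable f'' volume a b)
    (hQ : GodunovaLevin I (fun x => |f'' x|))
    (lam : ℝ) (hlam0 : 1 / 2 ≤ lam) :
    |(lam - 1) * f ((a + b) / 2) - lam * (f a + f b) / 2
        + (1 / (b - a)) * ∫ x in a..b, f x|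
      ≤ ((b - a) ^ 2 / 2) * ((lam - 1) * Real.log 2 + 1 / 2) *
          (|f'' a| + |f'' b|) := by
  have hh : 0 < b - a := sub_pos.mpr hab
  have hsub : Icc a b ⊆ I := hI'.out ha hb
  have hc : (b - a) / 2 ≤ lam * (b - a) := by nlinarith
  have hbound := abs_integral_kernel_mul_reflect_le hQ ha hb hab hc hint
  rw [integral_kernel_mul_reflect_eq hab.le (lam * (b - a)) (fun x hx => hf' x (hsub hx))
    (fun x hx => hf'' x (hsub hx)) hint] at hbound
  have hscale : (lam - 1) * f ((a + b) / 2) - lam * (f a + f b) / 2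
      + (1 / (b - a)) * ∫ x in a..b, f x
      = ((lam * (b - a) - (b - a)) * f ((a + b) / 2) - lam * (b - a) * (f a + f b) / 2
          + ∫ x in a..b, f x) / (b - a) := by
    field_simp
  rw [hscale, abs_div, abs_of_pos hh, div_le_iff₀ hh]
  exact hbound.trans_eq (by ring)

theorem godunova_levin_corollary_second_case
    (I : Set ℝ) (hI : IsOpen I) (hI' : I.OrdConnected)
    (a b : ℝ) (ha : a ∈ I) (hb : b ∈ I) (hab : a < b)
    (f f' f'' : ℝ → ℝ)
    (hf' : ∀ x ∈ I, HasDerivAt f (f' x) x)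
    (hf'' : ∀ x ∈ I, HasDerivAt f' (f'' x) x)
    (hint : IntervalIntegrable f'' volume a b)
    (hQ : GodunovaLevin I (fun x => |f'' x|))
    (lam : ℝ) (hlam0 : 1 / 2 ≤ lam) (hlam1 : lam ≤ 1) :
    |(lam - 1) * f ((a + b) / 2) - lam * (f a + f b) / 2
        + (1 / (b - a)) * ∫ x in a..b, f x|
      ≤ ((b - a) ^ 2 / 2) * ((lam - 1) * Real.log 2 + 1 / 2) *
          (|f'' a| + |f'' b|) :=
  godunova_levin_corollary_second_case_general I hI' a b ha hb hab f f' f'' hf' hf'' hint hQ lam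
    hlam0
end

section
/- Let I ⊂ ℝ be an open interval, a, b ∈ I with a < b, f : I → ℝ a twice differentiable mapping such that f'' is integrable on [a,b], and suppose |f''| belongs to the Godunova-Levin class Q(I). Then |(1/(b−a))·∫ₐᵇ f(x) dx − (f(a)+f(b))/2| ≤ ((b−a)²/2) · (1/2) · (|f''(a)| + |f''(b)|). -/
/-!
Integrating by parts twice gives
`∫ x in a..b, (x - a) * (b - x) * f'' x = (b - a) * (f a + f b) - 2 * ∫ x in a..b, f x`,
so the left-hand side equals `|∫ x in a..b, (x - a) * (b - x) * f'' x| / (2 * (b - a))`.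
Writing `x ∈ (a, b)` as the convex combination of `a` and `b` with weight `t = (b - x) / (b - a)`
on `a`, the Godunova–Levin inequality bounds `|f'' x|` by `|f'' a| / t + |f'' b| / (1 - t)`; the
kernel `(x - a) * (b - x)` cancels both singular weights, leaving the linear bound
`(b - a) * ((x - a) * |f'' a| + (b - x) * |f'' b|)`, whose integral is
`(b - a) ^ 3 / 2 * (|f'' a| + |f'' b|)`.
-/

open MeasureTheory Set Real

theorem GodunovaLevin.sub_mul_sub_mul_le {I : Set ℝ} {g : ℝ → ℝ} (hg : GodunovaLevin I g)
    {a b x : ℝ} (ha : a ∈ I) (hb : b ∈ I) (hx : x ∈ Icc a b) :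
    (x - a) * (b - x) * g x ≤ (b - a) * ((x - a) * g a + (b - x) * g b) := by
  obtain ⟨hxa, hxb⟩ := hx
  have hga := hg.1 a ha
  have hgb := hg.1 b hb
  rcases hxa.eq_or_lt with rfl | hxa
  · simp only [sub_self, zero_mul, zero_add]
    exact mul_nonneg (by linarith) (mul_nonneg (by linarith) hgb)
  rcases hxb.eq_or_lt with rfl | hxb
  · simp only [sub_self, mul_zero, zero_mul, add_zero]
    exact mul_nonneg (by linarith) (mul_nonneg (by linarith) hga)
  have hba : 0 < b - a := by linarith
  have hl : (b - x) / (b - a) < 1 := (div_lt_one hba).mpr (by linarith)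
  have hgx := hg.2 a ha b hb _ (div_pos (by linarith) hba) hl
  have hcomb : (b - x) / (b - a) * a + (1 - (b - x) / (b - a)) * b = x := by
    field_simp; ring
  have hcompl : 1 - (b - x) / (b - a) = (x - a) / (b - a) := by
    field_simp; ring
  rw [hcomb, hcompl, div_div_eq_mul_div, div_div_eq_mul_div] at hgx
  calc (x - a) * (b - x) * g x
      ≤ (x - a) * (b - x) * (g a * (b - a) / (b - x) + g b * (b - a) / (x - a)) := by
        gcongr
    _ = (b - a) * ((x - a) * g a + (b - x) * g b) := by
        field_simp

theorem integral_sub_mul_sub_mul_deriv2_eq {f f' f'' : ℝ → ℝ} {a b : ℝ}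
    (hf' : ∀ x ∈ uIcc a b, HasDerivAt f (f' x) x)
    (hf'' : ∀ x ∈ uIcc a b, HasDerivAt f' (f'' x) x)
    (hint : IntervalIntegrable f'' volume a b) :
    ∫ x in a..b, (x - a) * (b - x) * f'' x = (b - a) * (f a + f b) - 2 * ∫ x in a..b, f x := by
  have hderiv : ∀ x ∈ uIcc a b,
      HasDerivAt (fun y => (y - a) * (b - y) * f' y - (a + b - 2 * y) * f y)
        ((x - a) * (b - x) * f'' x + 2 * f x) x := by
    intro x hx
    have hw : HasDerivAt (fun y => (y - a) * (b - y)) (a + b - 2 * x) x := by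
      refine (((hasDerivAt_id' x).sub_const a).mul ((hasDerivAt_id' x).const_sub b)).congr_deriv ?_
      ring
    have hv : HasDerivAt (fun y => a + b - 2 * y) (-2) x := by
      simpa using ((hasDerivAt_id' x).const_mul 2).const_sub (a + b)
    exact ((hw.mul (hf'' x hx)).sub (hv.mul (hf' x hx))).congr_deriv (by ring)
  have hfc : ContinuousOn f (uIcc a b) := fun x hx =>
    (hf' x hx).continuousAt.continuousWithinAt
  have hint₁ : IntervalIntegrable (fun x => (x - a) * (b - x) * f'' x) volume a b :=
    hint.continuousOn_mul (by fun_prop)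
  have hint₂ : IntervalIntegrable (fun x => 2 * f x) volume a b :=
    (continuousOn_const.mul hfc).intervalIntegrable
  have hftc := intervalIntegral.integral_eq_sub_of_hasDerivAt hderiv (hint₁.add hint₂)
  rw [intervalIntegral.integral_add hint₁ hint₂, intervalIntegral.integral_const_mul] at hftc
  linear_combination hftc

theorem abs_integral_sub_mul_sub_mul_le_of_godunovaLevin {I : Set ℝ} {h : ℝ → ℝ} {a b : ℝ}
    (hQ : GodunovaLevin I fun x => |h x|) (ha : a ∈ I) (hb : b ∈ I) (hab : a ≤ b)
    (hint : IntervalIntegrable h volume a b) :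
    |∫ x in a..b, (x - a) * (b - x) * h x| ≤ (b - a) ^ 3 / 2 * (|h a| + |h b|) := by
  have hint_abs : IntervalIntegrable (fun x => |(x - a) * (b - x) * h x|) volume a b :=
    (hint.continuousOn_mul (by fun_prop)).abs
  have hint_bound : IntervalIntegrable
      (fun x => (b - a) * ((x - a) * |h a| + (b - x) * |h b|)) volume a b :=
    Continuous.intervalIntegrable (by fun_prop) _ _
  have hpointwise : ∀ x ∈ Icc a b,
      |(x - a) * (b - x) * h x| ≤ (b - a) * ((x - a) * |h a| + (b - x) * |h b|) := by
    intro x hx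
    rw [abs_mul, abs_of_nonneg (mul_nonneg (sub_nonneg.2 hx.1) (sub_nonneg.2 hx.2))]
    exact hQ.sub_mul_sub_mul_le ha hb hx
  have hlinear : ∫ x in a..b, ((x - a) * |h a| + (b - x) * |h b|)
      = (b - a) ^ 2 / 2 * (|h a| + |h b|) := by
    rw [intervalIntegral.integral_add (Continuous.intervalIntegrable (by fun_prop) _ _)
      (Continuous.intervalIntegrable (by fun_prop) _ _)]
    simp only [intervalIntegral.integral_mul_const,
      intervalIntegral.integral_comp_sub_right fun x => x,
      intervalIntegral.integral_comp_sub_left fun x => x, integral_id]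
    ring
  calc |∫ x in a..b, (x - a) * (b - x) * h x|
      ≤ ∫ x in a..b, |(x - a) * (b - x) * h x| :=
        intervalIntegral.abs_integral_le_integral_abs hab
    _ ≤ ∫ x in a..b, (b - a) * ((x - a) * |h a| + (b - x) * |h b|) :=
        intervalIntegral.integral_mono_on hab hint_abs hint_bound hpointwise
    _ = (b - a) ^ 3 / 2 * (|h a| + |h b|) := by
        rw [intervalIntegral.integral_const_mul, hlinear]
        ring

theorem godunova_levin_trapezoid_ineq_general
    (I : Set ℝ) (hI' : I.OrdConnected)
    (a b : ℝ) (ha : a ∈ I) (hb : b ∈ I) (hab : a < b)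
    (f f' f'' : ℝ → ℝ)
    (hf' : ∀ x ∈ I, HasDerivAt f (f' x) x)
    (hf'' : ∀ x ∈ I, HasDerivAt f' (f'' x) x)
    (hint : IntervalIntegrable f'' volume a b)
    (hQ : GodunovaLevin I (fun x => |f'' x|)) :
    |(1 / (b - a)) * (∫ x in a..b, f x) - (f a + f b) / 2|
      ≤ ((b - a) ^ 2 / 2) * (1 / 2) * (|f'' a| + |f'' b|) := by
  have hba : 0 < b - a := sub_pos.2 hab
  have hsub : uIcc a b ⊆ I := uIcc_of_le hab.le ▸ hI'.out ha hb
  have hidentity := integral_sub_mul_sub_mul_deriv2_eq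
    (fun x hx => hf' x (hsub hx)) (fun x hx => hf'' x (hsub hx)) hint
  have hbound := abs_integral_sub_mul_sub_mul_le_of_godunovaLevin hQ ha hb hab.le hint
  have hrewrite : (1 / (b - a)) * (∫ x in a..b, f x) - (f a + f b) / 2
      = -(∫ x in a..b, (x - a) * (b - x) * f'' x) / (2 * (b - a)) := by
    rw [hidentity]
    field_simp
    ring
  rw [hrewrite, abs_div, abs_neg, abs_of_pos (by positivity : (0 : ℝ) < 2 * (b - a)),
    div_le_iff₀ (by positivity)]
  exact hbound.trans_eq (by ring)

theorem godunova_levin_trapezoid_ineq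
    (I : Set ℝ) (hI : IsOpen I) (hI' : I.OrdConnected)
    (a b : ℝ) (ha : a ∈ I) (hb : b ∈ I) (hab : a < b)
    (f f' f'' : ℝ → ℝ)
    (hf' : ∀ x ∈ I, HasDerivAt f (f' x) x)
    (hf'' : ∀ x ∈ I, HasDerivAt f' (f'' x) x)
    (hint : IntervalIntegrable f'' volume a b)
    (hQ : GodunovaLevin I (fun x => |f'' x|)) :
    |(1 / (b - a)) * (∫ x in a..b, f x) - (f a + f b) / 2|
      ≤ ((b - a) ^ 2 / 2) * (1 / 2) * (|f'' a| + |f'' b|) :=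
  godunova_levin_trapezoid_ineq_general I hI' a b ha hb hab f f' f'' hf' hf'' hint hQ
end

section
/- Let I ⊂ ℝ be an open interval, a, b ∈ I with a < b, f : I → ℝ a twice differentiable mapping such that f'' is integrable on [a,b], and suppose |f''| belongs to the Godunova-Levin class Q(I). Then |(1/(b−a))·∫ₐᵇ f(x) dx − (1/2)·( f((a+b)/2) + (f(a)+f(b))/2 )| ≤ ((b−a)²/4) · (ln(1/2) + 1) · (|f''(a)| + |f''(b)|). -/
open MeasureTheory Set Real

/-! Integrating by parts twice on each half of `[a, b]` and folding `[m, b]` onto `[a, m]`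
by `x ↦ a + b - x` (with `m = (a + b) / 2`) writes the error as
`(1 / (2 (b - a))) ∫ₐᵐ (x - a) (x - m) (f'' x + f'' (a + b - x)) dx`.
The Godunova–Levin inequality at `λ = (b - x) / (b - a)` and at the reflected point gives
`|f'' x| + |f'' (a + b - x)| ≤ (b - a)² (|f'' a| + |f'' b|) / ((x - a) (b - x))`, so the factor
`x - a` of the kernel cancels and what is left is
`∫ₐᵐ (m - x) / (b - x) dx = (b - a) (1 - log 2) / 2`. -/

theorem GodunovaLevin.le_mul_div_add_div {I : Set ℝ} {g : ℝ → ℝ} (hg : GodunovaLevin I g)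
    {a b x : ℝ} (ha : a ∈ I) (hb : b ∈ I) (hx : x ∈ Ioo a b) :
    g x ≤ (b - a) * (g a / (b - x) + g b / (x - a)) := by
  obtain ⟨hax, hxb⟩ := hx
  have hba : 0 < b - a := by linarith
  have h := hg.2 a ha b hb ((b - x) / (b - a)) (div_pos (by linarith) hba)
    ((div_lt_one hba).2 (by linarith))
  have hcomb : (b - x) / (b - a) * a + (1 - (b - x) / (b - a)) * b = x := by
    field_simp; ring
  have hcompl : 1 - (b - x) / (b - a) = (x - a) / (b - a) := by
    field_simp; ring
  rw [hcomb, hcompl, div_div_eq_mul_div, div_div_eq_mul_div] at h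
  calc g x ≤ g a * (b - a) / (b - x) + g b * (b - a) / (x - a) := h
    _ = (b - a) * (g a / (b - x) + g b / (x - a)) := by ring

theorem GodunovaLevin.add_apply_reflect_le {I : Set ℝ} {g : ℝ → ℝ} (hg : GodunovaLevin I g)
    {a b x : ℝ} (ha : a ∈ I) (hb : b ∈ I) (hx : x ∈ Ioo a b) :
    g x + g (a + b - x) ≤ (b - a) ^ 2 * (g a + g b) / ((x - a) * (b - x)) := by
  have hx' : a + b - x ∈ Ioo a b := ⟨by linarith [hx.2], by linarith [hx.1]⟩
  have h1 := hg.le_mul_div_add_div ha hb hx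
  have h2 := hg.le_mul_div_add_div ha hb hx'
  have hxa : x - a ≠ 0 := by linarith [hx.1]
  have hbx : b - x ≠ 0 := by linarith [hx.2]
  calc g x + g (a + b - x)
      ≤ (b - a) * (g a / (b - x) + g b / (x - a))
        + (b - a) * (g a / (b - (a + b - x)) + g b / (a + b - x - a)) := add_le_add h1 h2
    _ = (b - a) ^ 2 * (g a + g b) / ((x - a) * (b - x)) := by
      rw [show b - (a + b - x) = x - a by ring, show a + b - x - a = b - x by ring]
      field_simp; ring

theorem GodunovaLevin.abs_kernel_mul_add_reflect_le {I : Set ℝ} {g : ℝ → ℝ}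
    (hg : GodunovaLevin I fun x => |g x|) {a b x : ℝ} (ha : a ∈ I) (hb : b ∈ I)
    (hx : x ∈ Ioc a ((a + b) / 2)) :
    |(x - a) * (x - (a + b) / 2) * (g x + g (a + b - x))|
      ≤ (b - a) ^ 2 * (|g a| + |g b|) * (((a + b) / 2 - x) / (b - x)) := by
  obtain ⟨hax, hxm⟩ := hx
  have hxa : 0 < x - a := by linarith
  have hbx : 0 < b - x := by linarith
  have hkernel : |(x - a) * (x - (a + b) / 2)| = (x - a) * ((a + b) / 2 - x) := by
    rw [abs_mul, abs_of_pos hxa, abs_of_nonpos (by linarith), neg_sub]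
  calc |(x - a) * (x - (a + b) / 2) * (g x + g (a + b - x))|
      ≤ (x - a) * ((a + b) / 2 - x) * (|g x| + |g (a + b - x)|) := by
        rw [abs_mul, hkernel]; gcongr; exact abs_add_le _ _
    _ ≤ (x - a) * ((a + b) / 2 - x) * ((b - a) ^ 2 * (|g a| + |g b|) / ((x - a) * (b - x))) := by
        gcongr
        exact hg.add_apply_reflect_le ha hb ⟨hax, by linarith⟩
    _ = (b - a) ^ 2 * (|g a| + |g b|) * (((a + b) / 2 - x) / (b - x)) := by
        field_simp

theorem integral_sub_mul_sub_mul_eq {f f' f'' : ℝ → ℝ} {p q : ℝ}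
    (hf : ∀ x ∈ uIcc p q, HasDerivAt f (f' x) x)
    (hf' : ∀ x ∈ uIcc p q, HasDerivAt f' (f'' x) x) (hf'' : IntervalIntegrable f'' volume p q) :
    ∫ x in p..q, (x - p) * (x - q) * f'' x =
      2 * (∫ x in p..q, f x) - (q - p) * (f p + f q) := by
  have hkernel : ∀ x ∈ uIcc p q, HasDerivAt (fun x => (x - p) * (x - q)) (2 * x - p - q) x :=
    fun x _ => (((hasDerivAt_id' x).sub_const p).fun_mul
      ((hasDerivAt_id' x).sub_const q)).congr_deriv (by ring)
  have hlin : ∀ x ∈ uIcc p q, HasDerivAt (fun x => 2 * x - p - q) 2 x := fun x _ => by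
    simpa using (((hasDerivAt_id x).const_mul 2).sub_const p).sub_const q
  have hf'c : ContinuousOn f' (uIcc p q) := fun x hx => (hf' x hx).continuousAt.continuousWithinAt
  rw [intervalIntegral.integral_mul_deriv_eq_deriv_mul hkernel hf'
      ((by fun_prop : Continuous fun x : ℝ => 2 * x - p - q).intervalIntegrable p q) hf'',
    intervalIntegral.integral_mul_deriv_eq_deriv_mul hlin hf intervalIntegrable_const
      hf'c.intervalIntegrable,
    intervalIntegral.integral_const_mul]
  ring

theorem average_sub_midpoint_trapezoid_eq {f f' f'' : ℝ → ℝ} {a b : ℝ} (hab : a < b)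
    (hf : ∀ x ∈ Icc a b, HasDerivAt f (f' x) x)
    (hf' : ∀ x ∈ Icc a b, HasDerivAt f' (f'' x) x) (hf'' : IntervalIntegrable f'' volume a b) :
    1 / (b - a) * (∫ x in a..b, f x) - 1 / 2 * (f ((a + b) / 2) + (f a + f b) / 2) =
      1 / (2 * (b - a)) *
        ∫ x in a..(a + b) / 2, (x - a) * (x - (a + b) / 2) * (f'' x + f'' (a + b - x)) := by
  set m := (a + b) / 2 with hm
  have hleft : uIcc a m ⊆ Icc a b := by
    rw [uIcc_of_le (by linarith)]; exact Icc_subset_Icc le_rfl (by linarith)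
  have hright : uIcc m b ⊆ Icc a b := by
    rw [uIcc_of_le (by linarith)]; exact Icc_subset_Icc (by linarith) le_rfl
  have hsub : uIcc a b = Icc a b := uIcc_of_le hab.le
  have hfc : ContinuousOn f (Icc a b) := fun x hx => (hf x hx).continuousAt.continuousWithinAt
  have hkernel : IntervalIntegrable (fun x => (x - a) * (x - m) * f'' x) volume a m :=
    (hf''.mono_set (hsub ▸ hleft)).continuousOn_mul (by fun_prop)
  have hreflected :
      IntervalIntegrable (fun x => (x - a) * (x - m) * f'' (a + b - x)) volume a m := by
    have h := (hf''.mono_set (hsub ▸ hright)).comp_sub_left (a + b)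
    rw [show a + b - m = m by rw [hm]; ring, add_sub_cancel_right] at h
    exact h.symm.continuousOn_mul (by fun_prop)
  have hreflect : ∫ x in a..m, (x - a) * (x - m) * f'' (a + b - x)
      = ∫ x in m..b, (x - m) * (x - b) * f'' x := by
    have := intervalIntegral.integral_comp_sub_left (fun y => (y - m) * (y - b) * f'' y) (a + b)
      (a := a) (b := m)
    rw [show a + b - m = m by rw [hm]; ring, add_sub_cancel_left] at this
    rw [← this]
    congr 1; ext x; ring
  conv_rhs => enter [2, 1, x]; rw [mul_add]
  rw [intervalIntegral.integral_add hkernel hreflected, hreflect,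
    integral_sub_mul_sub_mul_eq (fun x hx => hf x (hleft hx)) (fun x hx => hf' x (hleft hx))
      (hf''.mono_set (hsub ▸ hleft)),
    integral_sub_mul_sub_mul_eq (fun x hx => hf x (hright hx)) (fun x hx => hf' x (hright hx))
      (hf''.mono_set (hsub ▸ hright)),
    ← intervalIntegral.integral_add_adjacent_intervals (hfc.mono hleft).intervalIntegrable
      (hfc.mono hright).intervalIntegrable]
  have hba : b - a ≠ 0 := by linarith
  rw [hm]
  field_simp
  ring

theorem integral_midpoint_sub_div_sub {a b : ℝ} (hab : a < b) :
    ∫ x in a..(a + b) / 2, ((a + b) / 2 - x) / (b - x) = (b - a) / 2 * (1 - log 2) := by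
  have hF : ∀ x ∈ uIcc a ((a + b) / 2), HasDerivAt
      (fun x => x + (b - a) / 2 * log (b - x)) (((a + b) / 2 - x) / (b - x)) x := by
    intro x hx
    rw [uIcc_of_le (by linarith)] at hx
    have hbx : b - x ≠ 0 := by linarith [hx.2]
    refine ((hasDerivAt_id' x).fun_add
      ((((hasDerivAt_id' x).const_sub b).log hbx).const_mul ((b - a) / 2))).congr_deriv ?_
    field_simp; ring
  have hcont : ContinuousOn (fun x => ((a + b) / 2 - x) / (b - x)) (uIcc a ((a + b) / 2)) := by
    rw [uIcc_of_le (by linarith)]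
    exact ContinuousOn.div (by fun_prop) (by fun_prop) fun x hx => by linarith [hx.2]
  rw [intervalIntegral.integral_eq_sub_of_hasDerivAt hF hcont.intervalIntegrable,
    show b - (a + b) / 2 = (b - a) / 2 by ring, log_div (by linarith) two_ne_zero]
  ring

theorem godunova_levin_averaged_ineq_general
    (I : Set ℝ) (hI' : I.OrdConnected)
    (a b : ℝ) (ha : a ∈ I) (hb : b ∈ I) (hab : a < b)
    (f f' f'' : ℝ → ℝ)
    (hf' : ∀ x ∈ I, HasDerivAt f (f' x) x)
    (hf'' : ∀ x ∈ I, HasDerivAt f' (f'' x) x)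
    (hint : IntervalIntegrable f'' volume a b)
    (hQ : GodunovaLevin I (fun x => |f'' x|)) :
    |(1 / (b - a)) * (∫ x in a..b, f x)
        - (1 / 2) * (f ((a + b) / 2) + (f a + f b) / 2)|
      ≤ ((b - a) ^ 2 / 4) * (Real.log (1 / 2) + 1) * (|f'' a| + |f'' b|) := by
  have hIcc : Icc a b ⊆ I := hI'.out ha hb
  rw [average_sub_midpoint_trapezoid_eq hab (fun x hx => hf' x (hIcc hx))
    (fun x hx => hf'' x (hIcc hx)) hint]
  have hmajorant : IntervalIntegrable
      (fun x => (b - a) ^ 2 * (|f'' a| + |f'' b|) * (((a + b) / 2 - x) / (b - x)))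
      volume a ((a + b) / 2) := by
    refine ContinuousOn.intervalIntegrable ?_
    rw [uIcc_of_le (by linarith)]
    exact ContinuousOn.mul continuousOn_const <|
      ContinuousOn.div (by fun_prop) (by fun_prop) fun x hx => by linarith [hx.2]
  have hba : 0 < b - a := by linarith
  calc |1 / (2 * (b - a)) *
        ∫ x in a..(a + b) / 2, (x - a) * (x - (a + b) / 2) * (f'' x + f'' (a + b - x))|
      ≤ 1 / (2 * (b - a)) *
        ∫ x in a..(a + b) / 2,
          (b - a) ^ 2 * (|f'' a| + |f'' b|) * (((a + b) / 2 - x) / (b - x)) := by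
        rw [abs_mul, abs_of_pos (by positivity)]
        gcongr
        refine intervalIntegral.norm_integral_le_of_norm_le (E := ℝ) (by linarith)
          (ae_of_all _ fun x hx => ?_) hmajorant
        exact hQ.abs_kernel_mul_add_reflect_le ha hb hx
    _ = ((b - a) ^ 2 / 4) * (Real.log (1 / 2) + 1) * (|f'' a| + |f'' b|) := by
        rw [intervalIntegral.integral_const_mul, integral_midpoint_sub_div_sub hab, one_div 2,
          log_inv]
        field_simp
        ring

theorem godunova_levin_averaged_ineq
    (I : Set ℝ) (hI : IsOpen I) (hI' : I.OrdConnected)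
    (a b : ℝ) (ha : a ∈ I) (hb : b ∈ I) (hab : a < b)
    (f f' f'' : ℝ → ℝ)
    (hf' : ∀ x ∈ I, HasDerivAt f (f' x) x)
    (hf'' : ∀ x ∈ I, HasDerivAt f' (f'' x) x)
    (hint : IntervalIntegrable f'' volume a b)
    (hQ : GodunovaLevin I (fun x => |f'' x|)) :
    |(1 / (b - a)) * (∫ x in a..b, f x)
        - (1 / 2) * (f ((a + b) / 2) + (f a + f b) / 2)|
      ≤ ((b - a) ^ 2 / 4) * (Real.log (1 / 2) + 1) * (|f'' a| + |f'' b|) :=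
  godunova_levin_averaged_ineq_general I hI' a b ha hb hab f f' f'' hf' hf'' hint hQ
end
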